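/- arXiv:2211.09201 — 10 statements merged into one kernel-verified Lean document; each statement's English description precedes it below -/
import Mathlib

section
/- Let n > s be non-negative integers and let R : ℝ → ℝ. Define D(h) = R(2h) - 2^s·R(h). If R(h) = o(h^s) as h → 0 and D(h) = o(h^n) as h → 0, then R(h) = o(h^n) as h → 0. -/
/-!
Dividing by `h ^ s` reduces to the case `s = 0`: `g h = R h / h ^ s` tends to `0` and
`g (2 h) - g h = o(h ^ m)` with `m = n - s ≥ 1`. Then `g h - g (h / 2 ^ k)` telescopes into
dyadic differences whose bounds `ε |h| ^ m / 2 ^ (j + 1)` sum to at most `ε |h| ^ m`, and letting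
`k → ∞` gives `|g h| ≤ ε |h| ^ m`.
-/

open Filter Asymptotics Topology

section Dyadic

variable {E : Type*} [SeminormedAddCommGroup E] {g : ℝ → E} {m : ℕ}

theorem norm_sub_comp_div_two_pow_le (hm : 0 < m) {c δ : ℝ} (hc : 0 ≤ c)
    (hg : ∀ x : ℝ, x ≠ 0 → |x| < δ → ‖g (2 * x) - g x‖ ≤ c * |x| ^ m)
    {h : ℝ} (h0 : h ≠ 0) (hδ : |h| < δ) (k : ℕ) :
    ‖g h - g (h / 2 ^ k)‖ ≤ c * |h| ^ m := by
  have hstep : ∀ j : ℕ, ‖g (h / 2 ^ j) - g (h / 2 ^ (j + 1))‖ ≤ c * |h| ^ m / 2 ^ (j + 1) := by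
    intro j
    have hpos : (0 : ℝ) < 2 ^ (j + 1) := by positivity
    have hxδ : |h / 2 ^ (j + 1)| < δ := by
      rw [abs_div, abs_of_pos hpos]
      exact (div_le_self (abs_nonneg h) (one_le_pow₀ one_le_two)).trans_lt hδ
    have htwice : 2 * (h / 2 ^ (j + 1)) = h / 2 ^ j := by ring
    calc ‖g (h / 2 ^ j) - g (h / 2 ^ (j + 1))‖ ≤ c * |h / 2 ^ (j + 1)| ^ m := by
          simpa only [htwice] using hg _ (div_ne_zero h0 hpos.ne') hxδ
      _ = c * |h| ^ m / (2 ^ (j + 1)) ^ m := by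
          rw [abs_div, abs_of_pos hpos, div_pow, mul_div_assoc]
      _ ≤ c * |h| ^ m / 2 ^ (j + 1) := by
          gcongr
          exact le_self_pow₀ (one_le_pow₀ one_le_two) hm.ne'
  calc ‖g h - g (h / 2 ^ k)‖
      = ‖∑ j ∈ Finset.range k, (g (h / 2 ^ j) - g (h / 2 ^ (j + 1)))‖ := by
        rw [Finset.sum_range_sub', pow_zero, div_one]
    _ ≤ ∑ j ∈ Finset.range k, c * |h| ^ m / 2 ^ (j + 1) := norm_sum_le_of_le _ fun j _ => hstep j
    _ = c * |h| ^ m * (1 / 2 * ∑ j ∈ Finset.range k, (1 / 2 : ℝ) ^ j) := by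
        rw [Finset.mul_sum, Finset.mul_sum]
        refine Finset.sum_congr rfl fun j _ => ?_
        rw [one_div_pow]
        field_simp
        ring
    _ ≤ c * |h| ^ m := by
        have := sum_geometric_two_le k
        have : 0 ≤ c * |h| ^ m := by positivity
        nlinarith

theorem tendsto_div_two_pow_nhdsNE {h : ℝ} (h0 : h ≠ 0) :
    Tendsto (fun k : ℕ => h / 2 ^ k) atTop (𝓝[≠] 0) := by
  refine tendsto_nhdsWithin_of_tendsto_nhds_of_eventually_within _ ?_
    (Eventually.of_forall fun k => div_ne_zero h0 (by positivity))
  simpa [div_eq_mul_inv] using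
    (tendsto_pow_atTop_nhds_zero_of_lt_one (by norm_num : (0 : ℝ) ≤ 1 / 2) (by norm_num)).const_mul h

theorem isLittleO_pow_of_tendsto_of_isLittleO_sub_comp_two_mul (hm : 0 < m)
    (hg : Tendsto g (𝓝[≠] 0) (𝓝 0))
    (hD : (fun h => g (2 * h) - g h) =o[𝓝[≠] 0] fun h => h ^ m) :
    g =o[𝓝[≠] 0] fun h => h ^ m := by
  rw [isLittleO_iff] at hD ⊢
  intro c hc
  obtain ⟨δ, hδ, hDδ⟩ := Metric.eventually_nhds_iff.mp (eventually_nhdsWithin_iff.mp (hD hc))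
  have hdiff : ∀ x : ℝ, x ≠ 0 → |x| < δ → ‖g (2 * x) - g x‖ ≤ c * |x| ^ m := fun x hx0 hxδ => by
    simpa [abs_pow] using hDδ (by simpa using hxδ) hx0
  refine eventually_nhdsWithin_iff.mpr (Metric.eventually_nhds_iff.mpr ⟨δ, hδ, ?_⟩)
  intro h hhδ h0
  have hlim : Tendsto (fun k : ℕ => ‖g h - g (h / 2 ^ k)‖) atTop (𝓝 ‖g h - 0‖) :=
    ((hg.comp (tendsto_div_two_pow_nhdsNE h0)).const_sub (g h)).norm
  rw [sub_zero] at hlim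
  rw [norm_pow, Real.norm_eq_abs]
  exact le_of_tendsto hlim (Eventually.of_forall fun k =>
    norm_sub_comp_div_two_pow_le hm hc.le hdiff h0 (by simpa using hhδ) k)

end Dyadic

theorem isLittleO_sub_comp_two_mul_div_pow {R : ℝ → ℝ} {s m : ℕ}
    (hD : (fun h => R (2 * h) - 2 ^ s * R h) =o[𝓝[≠] 0] fun h => h ^ (s + m)) :
    (fun h => R (2 * h) / (2 * h) ^ s - R h / h ^ s) =o[𝓝[≠] 0] fun h => h ^ m := by
  have hdiv := (hD.mul_isBigO (isBigO_refl (fun h : ℝ => (h ^ s)⁻¹) _)).const_mul_left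
    ((2 : ℝ) ^ s)⁻¹
  refine hdiv.congr' ?_ ?_
  · filter_upwards [self_mem_nhdsWithin] with h (h0 : h ≠ 0)
    field_simp
    ring
  · filter_upwards [self_mem_nhdsWithin] with h (h0 : h ≠ 0)
    field_simp
    ring

theorem isLittleO_pow_add_of_isLittleO_div_pow {R : ℝ → ℝ} {s m : ℕ}
    (hR : (fun h => R h / h ^ s) =o[𝓝[≠] 0] fun h => h ^ m) :
    R =o[𝓝[≠] 0] fun h => h ^ (s + m) := by
  refine (hR.mul_isBigO (isBigO_refl (fun h : ℝ => h ^ s) _)).congr' ?_ ?_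
  · filter_upwards [self_mem_nhdsWithin] with h (h0 : h ≠ 0)
    exact div_mul_cancel₀ _ (pow_ne_zero s h0)
  · exact Eventually.of_forall fun h => by ring

theorem first_fundamental_lemma (n s : ℕ) (hns : s < n) (R : ℝ → ℝ)
    (hR : (fun h : ℝ => R h) =o[𝓝[≠] (0:ℝ)] fun h => h ^ s)
    (hD : (fun h : ℝ => R (2 * h) - 2 ^ s * R h) =o[𝓝[≠] (0:ℝ)] fun h => h ^ n) :
    (fun h : ℝ => R h) =o[𝓝[≠] (0:ℝ)] fun h => h ^ n := by
  obtain ⟨m, rfl⟩ := Nat.exists_eq_add_of_lt hns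
  have hquot : Tendsto (fun h => R h / h ^ s) (𝓝[≠] 0) (𝓝 0) := hR.tendsto_div_nhds_zero
  have hquotD := isLittleO_sub_comp_two_mul_div_pow (m := m + 1)
    (by simpa only [add_assoc] using hD)
  have hquotO := isLittleO_pow_of_tendsto_of_isLittleO_sub_comp_two_mul m.succ_pos hquot hquotD
  simpa only [add_assoc] using isLittleO_pow_add_of_isLittleO_div_pow hquotO
end

section
/- Let q > 1 be a real number, let n > s be non-negative integers, and let R : ℝ → ℝ. Define D(h) = R(qh) - q^s·R(h). If R(h) = o(h^s) and D(h) = o(h^n) as h → 0, then R(h) = o(h^n) as h → 0. -/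
open Filter Asymptotics Topology Finset

/-!
Iterating `R x = q ^ s * R (x / q) + D (x / q)` gives
`R h = (q ^ s) ^ m * R (h / q ^ m) + ∑ j < m, (q ^ s) ^ j * D (h / q ^ (j + 1))`.
The first term tends to `0` as `m → ∞` because `R = o(h ^ s)`, and when `|D x| ≤ C |x| ^ n`
near `0` the sum is dominated by a geometric series of ratio `q ^ s / q ^ n < 1`,
so `|R h| ≤ C |h| ^ n / (q ^ n - q ^ s)`.
-/

lemma eq_pow_mul_add_sum_sub_mul {α : Type*} [CommRing α] (f : ℕ → α) (c : α) (m : ℕ) :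
    f 0 = c ^ m * f m + ∑ j ∈ range m, c ^ j * (f j - c * f (j + 1)) := by
  have hterm : ∀ j ∈ range m,
      c ^ j * (f j - c * f (j + 1)) = c ^ j * f j - c ^ (j + 1) * f (j + 1) :=
    fun j _ => by ring
  rw [sum_congr rfl hterm, sum_range_sub']
  ring

lemma sum_pow_mul_div_pow_pow_le {q : ℝ} (hq : 1 < q) {s n : ℕ} (hsn : s < n) {a : ℝ}
    (ha : 0 ≤ a) (m : ℕ) :
    ∑ j ∈ range m, (q ^ s) ^ j * (a / q ^ (j + 1)) ^ n ≤ a ^ n / (q ^ n - q ^ s) := by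
  have hq0 : 0 < q := one_pos.trans hq
  have hqsn : q ^ s < q ^ n := pow_lt_pow_right₀ hq hsn
  set r := q ^ s / q ^ n
  have hterm : ∀ j ∈ range m, (q ^ s) ^ j * (a / q ^ (j + 1)) ^ n = a ^ n / q ^ n * r ^ j :=
    fun j _ => by simp only [r, div_pow, ← pow_mul]; field_simp; ring
  have hr1 : r < 1 := (div_lt_one (by positivity)).mpr hqsn
  calc ∑ j ∈ range m, (q ^ s) ^ j * (a / q ^ (j + 1)) ^ n
      = a ^ n / q ^ n * ∑ j ∈ Ico 0 m, r ^ j := by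
        rw [sum_congr rfl hterm, mul_sum, range_eq_Ico]
    _ ≤ a ^ n / q ^ n * (r ^ 0 / (1 - r)) := by
        gcongr
        exact geom_sum_Ico_le_of_lt_one (by positivity) hr1
    _ = a ^ n / (q ^ n - q ^ s) := by
        have : q ^ n - q ^ s ≠ 0 := (sub_pos.mpr hqsn).ne'
        simp only [r]; field_simp

lemma tendsto_pow_mul_apply_div_pow {q : ℝ} (hq : 1 < q) {s : ℕ} {R : ℝ → ℝ}
    (hR : R =o[𝓝[≠] 0] fun h => h ^ s) {h : ℝ} (hh : h ≠ 0) :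
    Tendsto (fun m : ℕ => (q ^ s) ^ m * R (h / q ^ m)) atTop (𝓝 0) := by
  have hq0 : q ≠ 0 := (one_pos.trans hq).ne'
  have hscale : Tendsto (fun m : ℕ => h / q ^ m) atTop (𝓝[≠] 0) :=
    tendsto_nhdsWithin_iff.mpr
      ⟨tendsto_const_nhds.div_atTop (tendsto_pow_atTop_atTop_of_one_lt hq),
        Eventually.of_forall fun m => div_ne_zero hh (pow_ne_zero m hq0)⟩
  have hrescaled : (fun m : ℕ => (q ^ s) ^ m * R (h / q ^ m)) =o[atTop] fun _ => h ^ s := by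
    refine ((isBigO_refl (fun m : ℕ => (q ^ s) ^ m) atTop).mul_isLittleO
      (hR.comp_tendsto hscale)).congr_right fun m => ?_
    simp only [Function.comp, div_pow, ← pow_mul]
    field_simp
    ring
  exact (isLittleO_const_iff (pow_ne_zero s hh)).mp hrescaled

lemma abs_le_of_abs_dilation_defect_le {q : ℝ} (hq : 1 < q) {s n : ℕ} (hsn : s < n)
    {R : ℝ → ℝ} (hR : R =o[𝓝[≠] 0] fun h => h ^ s) {C δ : ℝ} (hC : 0 ≤ C)
    (hD : ∀ x, x ≠ 0 → |x| < δ → |R (q * x) - q ^ s * R x| ≤ C * |x| ^ n)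
    {h : ℝ} (hh : h ≠ 0) (hhδ : |h| < δ) :
    |R h| ≤ C * |h| ^ n / (q ^ n - q ^ s) := by
  have hq0 : 0 < q := one_pos.trans hq
  set f : ℕ → ℝ := fun j => R (h / q ^ j)
  have hdefect : ∀ j, |f j - q ^ s * f (j + 1)| ≤ C * (|h| / q ^ (j + 1)) ^ n := by
    intro j
    have hx : h / q ^ (j + 1) ≠ 0 := div_ne_zero hh (by positivity)
    have habs : |h / q ^ (j + 1)| = |h| / q ^ (j + 1) := by
      rw [abs_div, abs_of_pos (pow_pos hq0 (j + 1))]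
    have hsmall : |h / q ^ (j + 1)| < δ :=
      habs ▸ (div_le_self (abs_nonneg h) (one_le_pow₀ hq.le)).trans_lt hhδ
    have hshift : q * (h / q ^ (j + 1)) = h / q ^ j := by field_simp; ring
    simpa only [f, hshift, habs] using hD _ hx hsmall
  have hpartial : ∀ m, |∑ j ∈ range m, (q ^ s) ^ j * (f j - q ^ s * f (j + 1))|
      ≤ C * |h| ^ n / (q ^ n - q ^ s) := fun m => calc
    _ ≤ ∑ j ∈ range m, (q ^ s) ^ j * (C * (|h| / q ^ (j + 1)) ^ n) := by
        refine (abs_sum_le_sum_abs _ _).trans (sum_le_sum fun j _ => ?_)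
        rw [abs_mul, abs_of_pos (by positivity)]
        gcongr
        exact hdefect j
    _ = C * ∑ j ∈ range m, (q ^ s) ^ j * (|h| / q ^ (j + 1)) ^ n := by
        rw [mul_sum]; exact sum_congr rfl fun j _ => by ring
    _ ≤ C * (|h| ^ n / (q ^ n - q ^ s)) := by
        gcongr; exact sum_pow_mul_div_pow_pow_le hq hsn (abs_nonneg h) m
    _ = C * |h| ^ n / (q ^ n - q ^ s) := by ring
  have hlim : Tendsto (fun m => ∑ j ∈ range m, (q ^ s) ^ j * (f j - q ^ s * f (j + 1)))
      atTop (𝓝 (R h)) := by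
    have := (tendsto_pow_mul_apply_div_pow hq hR hh).const_sub (R h)
    simp only [sub_zero] at this
    refine this.congr fun m => ?_
    have := eq_pow_mul_add_sum_sub_mul f (q ^ s) m
    simp only [f, pow_zero, div_one] at this ⊢
    linarith
  exact le_of_tendsto' hlim.abs hpartial

theorem first_fundamental_lemma_general (q : ℝ) (hq : 1 < q) (n s : ℕ) (hns : s < n)
    (R : ℝ → ℝ)
    (hR : (fun h : ℝ => R h) =o[𝓝[≠] (0:ℝ)] fun h => h ^ s)
    (hD : (fun h : ℝ => R (q * h) - q ^ s * R h) =o[𝓝[≠] (0:ℝ)] fun h => h ^ n) :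
    (fun h : ℝ => R h) =o[𝓝[≠] (0:ℝ)] fun h => h ^ n := by
  have hgap : 0 < q ^ n - q ^ s := sub_pos.mpr (pow_lt_pow_right₀ hq hns)
  refine isLittleO_iff.mpr fun ε hε => ?_
  obtain ⟨δ, hδ, hDδ⟩ := Metric.eventually_nhds_iff.mp
    (eventually_nhdsWithin_iff.mp (hD.def (mul_pos hε hgap)))
  refine eventually_nhdsWithin_iff.mpr (Metric.eventually_nhds_iff.mpr ⟨δ, hδ, ?_⟩)
  intro h hhδ hh
  have hbound := abs_le_of_abs_dilation_defect_le hq hns hR (mul_pos hε hgap).le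
    (fun x hx hxδ => by simpa [abs_pow] using hDδ (by simpa using hxδ) hx)
    hh (by simpa using hhδ)
  rw [Real.norm_eq_abs, norm_pow, Real.norm_eq_abs]
  calc |R h| ≤ ε * (q ^ n - q ^ s) * |h| ^ n / (q ^ n - q ^ s) := hbound
    _ = ε * |h| ^ n := by field_simp
end

section
/- For every positive integer k and every even integer n with n ≥ 2k, the sum ∑_{j=0}^{2k} (-1)^j · C(2k, j) · (k - j)^n is nonzero. -/
/-!
Up to the sign `(-1)^n` the sum is the central difference `δ^(2k) (x ↦ x^n)` at `0`. Since
`(y + 1)^m + (y - 1)^m - 2 y^m = ∑_{b < m} (1 + (-1)^(m-b)) C(m,b) y^b`, one `δ²` turns `x^m`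
into a combination of lower monomials with nonnegative coefficients. By induction on `k` all
`δ^(2k) (x^m) (0)` are nonnegative, and for even `n ≥ 2k` the term `b = 2k - 2` gives
`δ^(2k) (x^n) (0) ≥ 2 C(n, 2k-2) · δ^(2k-2) (x^(2k-2)) (0) = 2 C(n, 2k-2) (2k-2)! > 0`.
-/

open Finset

section CommRing

variable {R : Type*} [CommRing R]

theorem add_one_pow_add_sub_one_pow (y : R) (m : ℕ) :
    (y + 1) ^ m + (y - 1) ^ m =
      ∑ b ∈ range (m + 1), (1 + (-1) ^ (m - b)) * (m.choose b : R) * y ^ b := by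
  rw [sub_eq_add_neg, add_pow, add_pow, ← sum_add_distrib]
  refine sum_congr rfl fun b _ => ?_
  ring

theorem fwdDiff_iter_two_pow (m : ℕ) (x : R) :
    (fwdDiff (1 : R))^[2] (· ^ m) x =
      ∑ b ∈ range m, (1 + (-1) ^ (m - b)) * (m.choose b : R) * (x + 1) ^ b := by
  have h := add_one_pow_add_sub_one_pow (x + 1) m
  rw [sum_range_succ, Nat.sub_self, Nat.choose_self] at h
  simp only [Function.iterate_succ, Function.iterate_zero, Function.comp_apply, id_eq, fwdDiff]
  linear_combination h

variable (R) in
/-- The central difference `δ^(2k)` of `x ↦ x^m` at `0`, written as a forward difference. -/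
def centralDiffPow (k m : ℕ) : R :=
  (fwdDiff (1 : R))^[2 * k] (· ^ m) (-k)

theorem sum_neg_one_pow_mul_choose_mul_pow (k n : ℕ) :
    ∑ j ∈ range (2 * k + 1), (-1 : R) ^ j * (Nat.choose (2 * k) j : R) * ((k : R) - j) ^ n =
      (-1) ^ n * centralDiffPow R k n := by
  rw [centralDiffPow, fwdDiff_iter_eq_sum_shift, mul_sum]
  refine sum_congr rfl fun j hj => ?_
  have hsign : (-1 : R) ^ (2 * k - j) = (-1) ^ j :=
    neg_one_pow_congr (by simp [Nat.even_sub (Nat.lt_succ_iff.mp (mem_range.mp hj))])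
  rw [zsmul_eq_mul, nsmul_eq_mul]
  push_cast
  rw [hsign]
  have hsq : (-1 : R) ^ n * (-1) ^ n = 1 := by rw [← mul_pow]; norm_num
  rw [show -(k : R) + j * 1 = -1 * (k - j) by ring, mul_pow]
  linear_combination (-((-1) ^ j * ((2 * k).choose j : R) * (k - j) ^ n)) * hsq

theorem centralDiffPow_succ (k m : ℕ) :
    centralDiffPow R (k + 1) m =
      ∑ b ∈ range m, (1 + (-1) ^ (m - b)) * (m.choose b : R) * centralDiffPow R k b := by
  have hsecond : (fwdDiff (1 : R))^[2] (· ^ m) =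
      ∑ b ∈ range m, ((1 + (-1) ^ (m - b)) * (m.choose b : R)) • fun x : R => (x + 1) ^ b := by
    funext x
    simp [fwdDiff_iter_two_pow]
  have hpoint : -((k + 1 : ℕ) : R) + 1 = -k := by push_cast; ring
  rw [centralDiffPow, mul_add_one, Function.iterate_add_apply, hsecond, fwdDiff_iter_finsetSum,
    Finset.sum_apply]
  refine sum_congr rfl fun b _ => ?_
  rw [fwdDiff_iter_const_smul, Pi.smul_apply, smul_eq_mul, fwdDiff_iter_comp_add _ (· ^ b), hpoint,
    centralDiffPow]

theorem centralDiffPow_self (k : ℕ) : centralDiffPow R k (2 * k) = (2 * k).factorial := by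
  rw [centralDiffPow, fwdDiff_iter_eq_factorial]
  rfl

end CommRing

section Ordered

variable {R : Type*} [CommRing R] [LinearOrder R] [IsStrictOrderedRing R]

theorem one_add_neg_one_pow_mul_choose_nonneg (m b : ℕ) :
    0 ≤ (1 + (-1 : R) ^ (m - b)) * (m.choose b : R) := by
  refine mul_nonneg ?_ (Nat.cast_nonneg _)
  rcases (m - b).even_or_odd with h | h <;> simp [h.neg_one_pow]

theorem centralDiffPow_nonneg (k m : ℕ) : 0 ≤ centralDiffPow R k m := by
  induction k generalizing m with
  | zero => exact pow_nonneg (by simp) m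
  | succ k ih =>
    rw [centralDiffPow_succ]
    exact sum_nonneg fun b _ => mul_nonneg (one_add_neg_one_pow_mul_choose_nonneg m b) (ih b)

theorem centralDiffPow_pos {k m : ℕ} (hm : Even m) (hkm : 2 * (k + 1) ≤ m) :
    0 < centralDiffPow R (k + 1) m := by
  rw [centralDiffPow_succ]
  refine sum_pos' (fun b _ => mul_nonneg (one_add_neg_one_pow_mul_choose_nonneg m b)
    (centralDiffPow_nonneg k b)) ⟨2 * k, mem_range.mpr (by omega), ?_⟩
  have hcoeff : (1 : R) + (-1) ^ (m - 2 * k) = 2 := by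
    rw [(Nat.even_sub (by omega)).mpr (by simp [hm]) |>.neg_one_pow]
    norm_num
  rw [hcoeff, centralDiffPow_self]
  have := Nat.choose_pos (show 2 * k ≤ m by omega)
  positivity

end Ordered

theorem Sk_moment_nonzero (k n : ℕ) (hk : 0 < k) (hn : Even n) (hkn : 2 * k ≤ n) :
    ∑ j ∈ Finset.range (2 * k + 1),
      (-1 : ℝ) ^ j * (Nat.choose (2 * k) j : ℝ) * ((k : ℝ) - j) ^ n ≠ 0 := by
  obtain ⟨k, rfl⟩ := Nat.exists_eq_add_one_of_ne_zero hk.ne'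
  rw [sum_neg_one_pow_mul_choose_mul_pow, hn.neg_one_pow, one_mul]
  exact (centralDiffPow_pos hn hkn).ne'
end

section
/- For every positive integer k and every odd integer n with n ≥ 2k−1, the sum ∑_{j=0}^{2k-1} (-1)^j · C(2k−1, j) · [(k−j)^n + (k−1−j)^n] is nonzero. -/
/-!
With `m = 2k - 1` the sum is `δᵐ(xⁿ)(1/2) + δᵐ(xⁿ)(-1/2)`, where `δ f (x) = f (x + 1/2) - f (x - 1/2)`
is the unit-step central difference. Reflecting `x ↦ -x` multiplies `δᵐ` by `(-1)ᵐ`, so for odd `m`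
and odd `n` both terms are equal. Positivity of `δᵐ(xⁿ)` on `x > 0` for `m ≤ n` follows by induction
on `m`: `(x + 1/2)ⁿ - (x - 1/2)ⁿ` is a combination of the powers `xⁱ` with nonnegative coefficients,
that of `xⁿ⁻¹` being positive.
-/

open Finset

noncomputable def centralDiff (m : ℕ) (f : ℝ → ℝ) (y : ℝ) : ℝ :=
  (fwdDiff 1)^[m] f (y - m / 2)

@[simp]
lemma centralDiff_zero (f : ℝ → ℝ) (y : ℝ) : centralDiff 0 f y = f y := by
  simp [centralDiff]

lemma centralDiff_succ (m : ℕ) (f : ℝ → ℝ) (y : ℝ) :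
    centralDiff (m + 1) f y = centralDiff m (fun x ↦ f (x + 1 / 2) - f (x - 1 / 2)) y := by
  have hshift : (fun x ↦ f (x + 1 / 2) - f (x - 1 / 2)) = fun x ↦ fwdDiff 1 f (x + -(1 / 2)) := by
    ext x
    simp only [fwdDiff]
    ring_nf
  rw [centralDiff, centralDiff, Function.iterate_succ_apply, hshift, fwdDiff_iter_comp_add]
  push_cast
  ring_nf

lemma centralDiff_finsetSum_mul {ι : Type*} (m : ℕ) (s : Finset ι) (c : ι → ℝ)
    (g : ι → ℝ → ℝ) (y : ℝ) :
    centralDiff m (fun x ↦ ∑ i ∈ s, c i * g i x) y = ∑ i ∈ s, c i * centralDiff m (g i) y := by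
  have hfun : (fun x ↦ ∑ i ∈ s, c i * g i x) = ∑ i ∈ s, c i • g i := by
    ext x
    simp [Finset.sum_apply]
  simp [centralDiff, hfun]

lemma centralDiff_neg (m : ℕ) (f : ℝ → ℝ) (y : ℝ) :
    centralDiff m (fun x ↦ -f x) y = -centralDiff m f y := by
  show (fwdDiff 1)^[m] (-f) _ = -(fwdDiff 1)^[m] f _
  simpa using congr_fun (fwdDiff_iter_const_smul 1 (-1 : ℝ) f m) (y - m / 2)

lemma centralDiff_comp_neg (m : ℕ) (f : ℝ → ℝ) (y : ℝ) :
    centralDiff m (fun x ↦ f (-x)) y = (-1) ^ m * centralDiff m f (-y) := by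
  induction m generalizing f with
  | zero => simp
  | succ m ih =>
    let g : ℝ → ℝ := fun z ↦ f (z + 1 / 2) - f (z - 1 / 2)
    have hflip : (fun x ↦ f (-(x + 1 / 2)) - f (-(x - 1 / 2))) = fun x ↦ -g (-x) := by
      ext x
      simp only [g]
      ring_nf
    rw [centralDiff_succ, centralDiff_succ, hflip, centralDiff_neg, ih g, pow_succ]
    ring

lemma Function.Odd.centralDiff_neg {f : ℝ → ℝ} (hf : f.Odd) {m : ℕ} (hm : Odd m) (y : ℝ) :
    centralDiff m f (-y) = centralDiff m f y := by
  have h := centralDiff_comp_neg m f y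
  simp only [hf.eq, _root_.centralDiff_neg, hm.neg_one_pow] at h
  linarith

lemma centralDiff_eq_sum (m : ℕ) (f : ℝ → ℝ) (y : ℝ) :
    centralDiff m f y = ∑ j ∈ range (m + 1), (-1) ^ j * (m.choose j : ℝ) * f (y + m / 2 - j) := by
  rw [centralDiff, fwdDiff_iter_eq_sum_shift, ← sum_range_reflect]
  refine sum_congr rfl fun j hj ↦ ?_
  have hjm : j ≤ m := Nat.lt_succ_iff.mp (mem_range.mp hj)
  rw [Nat.add_sub_cancel, Nat.sub_sub_self hjm, Nat.choose_symm hjm, zsmul_eq_mul, nsmul_one,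
    Nat.cast_sub hjm]
  push_cast
  ring_nf

lemma add_half_pow_sub_sub_half_pow (x : ℝ) (n : ℕ) :
    (x + 1 / 2) ^ n - (x - 1 / 2) ^ n =
      ∑ i ∈ range (n + 1), n.choose i * (1 / 2) ^ (n - i) * (1 - (-1) ^ (n - i)) * x ^ i := by
  rw [sub_eq_add_neg x, add_pow, add_pow, ← sum_sub_distrib]
  refine sum_congr rfl fun i _ ↦ ?_
  rw [neg_pow]
  ring

lemma centralDiff_pow_succ (m n : ℕ) (y : ℝ) :
    centralDiff (m + 1) (· ^ n) y = ∑ i ∈ range (n + 1),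
      n.choose i * (1 / 2) ^ (n - i) * (1 - (-1) ^ (n - i)) * centralDiff m (· ^ i) y := by
  simp_rw [centralDiff_succ, add_half_pow_sub_sub_half_pow]
  exact centralDiff_finsetSum_mul ..

lemma one_sub_neg_one_pow_nonneg (j : ℕ) : 0 ≤ 1 - (-1 : ℝ) ^ j :=
  sub_nonneg.2 <| (le_abs_self _).trans (abs_neg_one_pow j).le

lemma centralDiff_pow_nonneg (m n : ℕ) {y : ℝ} (hy : 0 ≤ y) : 0 ≤ centralDiff m (· ^ n) y := by
  induction m generalizing n with
  | zero => simpa using pow_nonneg hy n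
  | succ m ih =>
    rw [centralDiff_pow_succ]
    refine sum_nonneg fun i _ ↦ ?_
    have := one_sub_neg_one_pow_nonneg (n - i)
    have := ih i
    positivity

lemma centralDiff_pow_pos {m n : ℕ} (hmn : m ≤ n) {y : ℝ} (hy : 0 < y) :
    0 < centralDiff m (· ^ n) y := by
  induction m generalizing n with
  | zero => simpa using pow_pos hy n
  | succ m ih =>
    rw [centralDiff_pow_succ]
    refine sum_pos' (fun i _ ↦ ?_) ⟨n - 1, mem_range.2 (by omega), ?_⟩
    · have := one_sub_neg_one_pow_nonneg (n - i)
      have := centralDiff_pow_nonneg m i hy.le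
      positivity
    · rw [Nat.sub_sub_self (by omega : 1 ≤ n)]
      have := ih (n := n - 1) (by omega)
      have : 0 < n.choose (n - 1) := Nat.choose_pos (Nat.sub_le n 1)
      norm_num
      positivity

theorem Tk_moment_nonzero (k n : ℕ) (hk : 0 < k) (hn : Odd n) (hkn : 2 * k - 1 ≤ n) :
    ∑ j ∈ Finset.range (2 * k),
      (-1 : ℝ) ^ j * (Nat.choose (2 * k - 1) j : ℝ) *
        (((k : ℝ) - j) ^ n + ((k : ℝ) - 1 - j) ^ n) ≠ 0 := by
  set m := 2 * k - 1
  have hm : Odd m := ⟨k - 1, by omega⟩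
  have hm_cast : (m : ℝ) = 2 * k - 1 := by
    rw [Nat.cast_sub (by omega)]
    push_cast
    ring
  have hsplit : ∑ j ∈ range (2 * k), (-1 : ℝ) ^ j * (m.choose j : ℝ) *
      (((k : ℝ) - j) ^ n + ((k : ℝ) - 1 - j) ^ n) =
      centralDiff m (· ^ n) (1 / 2) + centralDiff m (· ^ n) (-(1 / 2)) := by
    rw [centralDiff_eq_sum, centralDiff_eq_sum, ← sum_add_distrib, show 2 * k = m + 1 by omega]
    refine sum_congr rfl fun j _ ↦ ?_
    rw [hm_cast]
    ring_nf
  have hodd : Function.Odd (· ^ n : ℝ → ℝ) := hn.neg_pow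
  rw [hsplit, hodd.centralDiff_neg hm]
  have := centralDiff_pow_pos hkn (one_half_pos : (0 : ℝ) < 1 / 2)
  positivity
end

section
/- If a function f and a point c satisfy that both limits lim_{h→0} [f(c+h) − f(c−h)]/h and lim_{h→0} [f(c+h) − 2f(c) + f(c−h)]/h exist (as finite real numbers), then f is differentiable at c. -/
/-! The forward difference quotient is the average of the two given quotients:
`(f (c + h) - f c) / h` is half the sum of `(f (c + h) - f (c - h)) / h` and
`(f (c + h) - 2 f c + f (c - h)) / h`, so it converges to `(L + M) / 2`. -/

open Filter Topology

lemma hasDerivAt_of_tendsto_symmetric_and_second_difference_quotients {f : ℝ → ℝ} {c L M : ℝ}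
    (hL : Tendsto (fun h : ℝ => (f (c + h) - f (c - h)) / h) (𝓝[≠] 0) (𝓝 L))
    (hM : Tendsto (fun h : ℝ => (f (c + h) - 2 * f c + f (c - h)) / h) (𝓝[≠] 0) (𝓝 M)) :
    HasDerivAt f ((L + M) / 2) c := by
  rw [hasDerivAt_iff_tendsto_slope_zero]
  refine ((hL.add hM).div_const 2).congr fun h => ?_
  simp only [smul_eq_mul]
  ring

/-- If both the symmetric first difference quotient and the second-difference-over-h
quotient of `f` at `c` have finite limits as `h → 0`, then `f` is differentiable at `c`. -/
theorem differentiable_of_two_smoothness_conditions (f : ℝ → ℝ) (c : ℝ)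
    (h1 : ∃ L : ℝ, Tendsto (fun h : ℝ => (f (c + h) - f (c - h)) / h) (𝓝[≠] 0) (𝓝 L))
    (h2 : ∃ M : ℝ, Tendsto (fun h : ℝ => (f (c + h) - 2 * f c + f (c - h)) / h)
      (𝓝[≠] 0) (𝓝 M)) :
    DifferentiableAt ℝ f c := by
  obtain ⟨L, hL⟩ := h1
  obtain ⟨M, hM⟩ := h2
  exact (hasDerivAt_of_tendsto_symmetric_and_second_difference_quotients hL hM).differentiableAt
end

section
/- Let n ≥ 2 and let {D_α} be a finite collection of differences centered at c, each of order at least n. Then there exists a measurable function f that is (n−2) times Peano differentiable at c, satisfies D_α(h)(f) = 0 for all α and all h, but is not n times Peano differentiable at c. -/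
open Filter Topology Asymptotics Finset

/-- `f` is `m` times Peano differentiable at `c`: there is a polynomial `p` of degree
at most `m` with `f (c + h) - p (c + h) = o(hᵐ)` as `h → 0`. -/
def PeanoDifferentiable (m : ℕ) (f : ℝ → ℝ) (c : ℝ) : Prop :=
  ∃ p : Polynomial ℝ, p.degree ≤ (m : ℕ∞) ∧
    (fun h : ℝ => f (c + h) - p.eval (c + h)) =o[𝓝[≠] (0:ℝ)] fun h => h ^ m

/-- A difference centered at `c`: nonzero coefficients and distinct nodes. -/
structure DifferenceAt (c : ℝ) where
  m : ℕ
  a : Fin (m + 1) → ℝ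
  b : Fin (m + 1) → ℝ
  a_ne : ∀ i, a i ≠ 0
  b_inj : Function.Injective b

/-- The value of the difference applied to `f` at increment `h`. -/
def DifferenceAt.apply {c : ℝ} (D : DifferenceAt c) (f : ℝ → ℝ) (h : ℝ) : ℝ :=
  ∑ i, D.a i * f (c + D.b i * h)

/-- The difference has order at least `n`. -/
def DifferenceAt.orderAtLeast {c : ℝ} (D : DifferenceAt c) (n : ℕ) : Prop :=
  ∀ k < n, ∑ i, D.a i * D.b i ^ k = 0

/-!
Let `G ≤ ℝˣ` be the (countable) group generated by the nonzero nodes and `2`, and put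
`f (c + h) = hⁿ⁻¹` for `h ∈ G`, `f (c + h) = 0` otherwise. Since `G` is stable under
multiplication by the nodes, `h ↦ f (c + b h)` equals `bⁿ⁻¹ f (c + h)` for every node `b`,
so each difference of order `≥ n` kills `f`. The bound `|f (c + h)| ≤ |h|ⁿ⁻¹` gives Peano
differentiability of order `n - 2`. An `n`-th Peano polynomial would have to be `o(hⁿ)`
along the co-countable set where `f (c + ·)` vanishes, hence be `0`; then `hⁿ⁻¹ = o(hⁿ)`
along `G ∋ 2⁻ʲ → 0`, which is absurd.
-/

open Polynomial

theorem Polynomial.eq_zero_of_isLittleO_pow {𝕜 : Type*} [NormedField 𝕜] {l : Filter 𝕜}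
    [l.NeBot] (hl : l ≤ 𝓝[≠] 0) {n : ℕ} {q : 𝕜[X]} (hdeg : q.natDegree ≤ n)
    (hq : (fun x => q.eval x) =o[l] (· ^ n)) : q = 0 := by
  induction n generalizing q with
  | zero =>
    rw [eq_C_of_natDegree_le_zero hdeg] at hq ⊢
    simp only [eval_C, pow_zero, isLittleO_one_iff] at hq
    rw [tendsto_const_nhds_iff.mp hq, map_zero]
  | succ n ih =>
    have hcoeff : q.coeff 0 = 0 := by
      have hzero : Tendsto (fun x => q.eval x) l (𝓝 0) :=
        hq.trans_tendsto <| by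
          simpa using ((continuous_pow (n + 1)).tendsto (0 : 𝕜)).mono_left
            (hl.trans nhdsWithin_le_nhds)
      rw [coeff_zero_eq_eval_zero]
      exact tendsto_nhds_unique
        ((q.continuous.tendsto 0).mono_left (hl.trans nhdsWithin_le_nhds)) hzero
    have hne : ∀ᶠ x in l, x ≠ 0 := hl self_mem_nhdsWithin
    have hdivX : (fun x => q.divX.eval x) =o[l] (· ^ n) := by
      rw [← q.divX_mul_X_add, hcoeff, map_zero, add_zero] at hq
      simp only [eval_mul, eval_X] at hq
      refine ((isLittleO_mul_iff_isLittleO_div hne).mp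
        (hq.congr_left fun x => mul_comm _ _)).congr' EventuallyEq.rfl ?_
      filter_upwards [hne] with x hx
      rw [pow_succ, mul_div_cancel_right₀ _ hx]
    rw [← q.divX_mul_X_add, ih (by rw [natDegree_divX_eq_natDegree_tsub_one]; omega) hdivX,
      hcoeff]
    simp

theorem Subgroup.countable_closure {G : Type*} [Group G] {s : Set G} (hs : s.Countable) :
    (closure s : Set G).Countable := by
  have : Countable s := hs.to_subtype
  rw [FreeGroup.closure_eq_range]
  exact Set.countable_range _

theorem Subgroup.val_mul_mem_image_val_iff {M₀ : Type*} [MonoidWithZero M₀] {G : Subgroup M₀ˣ}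
    {u : M₀ˣ} (hu : u ∈ G) {x : M₀} :
    (u : M₀) * x ∈ Units.val '' (G : Set M₀ˣ) ↔ x ∈ Units.val '' (G : Set M₀ˣ) := by
  constructor
  · rintro ⟨w, hw, hwx⟩
    exact ⟨u⁻¹ * w, G.mul_mem (G.inv_mem hu) hw, by rw [Units.val_mul, hwx, u.inv_mul_cancel_left]⟩
  · rintro ⟨w, hw, rfl⟩
    exact ⟨u * w, G.mul_mem hu hw, Units.val_mul _ _⟩

theorem DifferenceAt.apply_eq_zero_of_homogeneous {c : ℝ} {D : DifferenceAt c} {n k : ℕ}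
    (hD : D.orderAtLeast n) (hk : k < n) {f : ℝ → ℝ} {h : ℝ}
    (hf : ∀ i, f (c + D.b i * h) = D.b i ^ k * f (c + h)) : D.apply f h = 0 := by
  simp only [DifferenceAt.apply, hf, ← mul_assoc, ← sum_mul, hD k hk, zero_mul]

theorem peanoDifferentiable_of_abs_le_pow_succ {m : ℕ} {f : ℝ → ℝ} {c : ℝ}
    (hf : ∀ h, |f (c + h)| ≤ |h| ^ (m + 1)) : PeanoDifferentiable m f c := by
  refine ⟨0, degree_zero.trans_le bot_le, ?_⟩
  have hbig : (fun h => f (c + h) - eval (c + h) 0) =O[𝓝 0] (· ^ (m + 1)) :=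
    IsBigO.of_bound 1 (Eventually.of_forall fun h => by simpa [abs_pow] using hf h)
  exact (hbig.trans_isLittleO (isLittleO_pow_pow m.lt_succ_self)).mono nhdsWithin_le_nhds

theorem PeanoDifferentiable.isLittleO_pow_of_countable_support {n : ℕ} {f : ℝ → ℝ} {c : ℝ}
    (hf : PeanoDifferentiable n f c) (hs : (Function.support fun h => f (c + h)).Countable) :
    (fun h => f (c + h)) =o[𝓝[≠] 0] (· ^ n) := by
  obtain ⟨p, hdeg, ho⟩ := hf
  set s := Function.support fun h => f (c + h)
  let q := p.comp (X + C c)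
  have hq : ∀ h, q.eval h = p.eval (c + h) := fun h => by simp [q, add_comm]
  have hl : 𝓝[(insert 0 s)ᶜ] (0 : ℝ) ≤ 𝓝[≠] 0 :=
    nhdsWithin_mono _ (Set.compl_subset_compl.mpr (by simp))
  have : (𝓝[(insert 0 s)ᶜ] (0 : ℝ)).NeBot :=
    mem_closure_iff_nhdsWithin_neBot.mp ((hs.insert 0).dense_compl ℝ 0)
  have hq0 : q = 0 := by
    refine Polynomial.eq_zero_of_isLittleO_pow hl ?_ ((ho.mono hl).neg_left.congr' ?_ .rfl)
    · rw [natDegree_comp]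
      simpa using natDegree_le_iff_degree_le.mpr hdeg
    · filter_upwards [self_mem_nhdsWithin] with h hh
      rw [hq, Function.notMem_support.mp fun hx => hh (Or.inr hx), zero_sub, neg_neg]
  exact ho.congr_left fun h => by rw [← hq, hq0, eval_zero, sub_zero]

noncomputable def indicatorPow (G : Subgroup ℝˣ) (k : ℕ) (c x : ℝ) : ℝ :=
  (Units.val '' (G : Set ℝˣ)).indicator (· ^ k) (x - c)

section indicatorPow

variable {G : Subgroup ℝˣ} {k : ℕ} {c : ℝ}

theorem indicatorPow_add (h : ℝ) :
    indicatorPow G k c (c + h) = (Units.val '' (G : Set ℝˣ)).indicator (· ^ k) h := by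
  rw [indicatorPow, add_sub_cancel_left]

theorem measurable_indicatorPow (hG : (G : Set ℝˣ).Countable) :
    Measurable (indicatorPow G k c) :=
  ((measurable_id.pow_const k).indicator (hG.image _).measurableSet).comp
    (measurable_id.sub_const c)

theorem peanoDifferentiable_indicatorPow {m : ℕ} :
    PeanoDifferentiable m (indicatorPow G (m + 1) c) c :=
  peanoDifferentiable_of_abs_le_pow_succ fun h => by
    classical
    rw [indicatorPow_add, Set.indicator_apply]
    split_ifs <;> simp [abs_pow]

theorem DifferenceAt.apply_indicatorPow_eq_zero {D : DifferenceAt c} {n : ℕ}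
    (hD : D.orderAtLeast n) (hk : k ≠ 0) (hkn : k < n)
    (hG : ∀ i, D.b i ≠ 0 → D.b i ∈ Units.val '' (G : Set ℝˣ)) (h : ℝ) :
    D.apply (indicatorPow G k c) h = 0 := by
  classical
  refine D.apply_eq_zero_of_homogeneous hD hkn fun i => ?_
  simp only [indicatorPow_add, Set.indicator_apply]
  by_cases hb : D.b i = 0
  · simp [hb, zero_pow hk]
  · obtain ⟨u, hu, hub⟩ := hG i hb
    rw [← hub, Subgroup.val_mul_mem_image_val_iff hu]
    split_ifs <;> ring

theorem not_peanoDifferentiable_indicatorPow (hG : (G : Set ℝˣ).Countable)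
    (hu : ∃ u ∈ G, |(u : ℝ)| < 1) : ¬ PeanoDifferentiable (k + 1) (indicatorPow G k c) c := by
  intro hf
  set S := Units.val '' (G : Set ℝˣ)
  have hsupp : (Function.support fun h => indicatorPow G k c (c + h)) ⊆ S := by
    simp only [indicatorPow_add]
    exact Set.support_indicator_subset
  have ho := hf.isLittleO_pow_of_countable_support ((hG.image _).mono hsupp)
  obtain ⟨u, huG, hu1⟩ := hu
  have : (𝓝[S] (0 : ℝ)).NeBot := mem_closure_iff_nhdsWithin_neBot.mp <|
    mem_closure_of_tendsto (tendsto_pow_atTop_nhds_zero_of_abs_lt_one hu1) <|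
      Eventually.of_forall fun j => ⟨u ^ j, G.pow_mem huG j, Units.val_pow_eq_pow_val u j⟩
  have hl : 𝓝[S] (0 : ℝ) ≤ 𝓝[≠] 0 := nhdsWithin_mono _ fun _ ⟨w, _, hw⟩ => hw ▸ w.ne_zero
  refine pow_ne_zero k (X_ne_zero (R := ℝ)) <|
    Polynomial.eq_zero_of_isLittleO_pow hl ((natDegree_X_pow_le k).trans k.le_succ) ?_
  refine (ho.mono hl).congr' ?_ .rfl
  filter_upwards [self_mem_nhdsWithin] with h hh
  rw [indicatorPow_add, Set.indicator_of_mem hh, eval_pow, eval_X]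

end indicatorPow

/-- For a finite collection of differences of order at least `n ≥ 2` centered at `c`,
there is a measurable function, `(n-2)` times Peano differentiable at `c`, killed by
every difference in the collection, which is not `n` times Peano differentiable at `c`. -/
theorem exists_killed_function_order_n (n : ℕ) (hn : 2 ≤ n) (c : ℝ)
    (ι : Type) [Fintype ι] (D : ι → DifferenceAt c)
    (hord : ∀ α, (D α).orderAtLeast n) :
    ∃ f : ℝ → ℝ, Measurable f ∧ PeanoDifferentiable (n - 2) f c ∧
      (∀ α, ∀ h : ℝ, (D α).apply f h = 0) ∧ ¬ PeanoDifferentiable n f c := by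
  obtain ⟨m, rfl⟩ := Nat.exists_eq_add_of_le' hn
  let S : Set ℝˣ := Units.val ⁻¹' insert 2 (⋃ α, Set.range (D α).b)
  let G := Subgroup.closure S
  have hG : (G : Set ℝˣ).Countable := Subgroup.countable_closure <|
    ((Set.countable_iUnion fun α => Set.countable_range _).insert 2).preimage Units.val_injective
  have hnodes (α : ι) (i : Fin ((D α).m + 1)) (hb : (D α).b i ≠ 0) : (D α).b i ∈ Units.val '' (G : Set ℝˣ) :=
    ⟨Units.mk0 _ hb, Subgroup.subset_closure (Or.inr (Set.mem_iUnion.mpr ⟨α, i, rfl⟩)), rfl⟩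
  have hhalf : (Units.mk0 (2 : ℝ) two_ne_zero)⁻¹ ∈ G :=
    G.inv_mem (Subgroup.subset_closure (Or.inl rfl))
  refine ⟨indicatorPow G (m + 1) c, measurable_indicatorPow hG, ?_,
    fun α => (D α).apply_indicatorPow_eq_zero (hord α) m.succ_ne_zero (by omega) (hnodes α),
    not_peanoDifferentiable_indicatorPow hG ⟨_, hhalf, by norm_num⟩⟩
  rw [Nat.add_sub_cancel]
  exact peanoDifferentiable_indicatorPow
end

section
/- An exact n-th generalized Riemann difference whose set of nodes is symmetric relative to the origin is a symmetric difference, i.e., satisfies D(−h) = (−1)^n D(h). -/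
open Finset

/-! A symmetric node set means `b ∘ σ = -b` for a permutation `σ` of the indices. Reindexing by `σ`
multiplies the `k`-th moment `∑ aᵢ bᵢᵏ` of any coefficients by `(-1)ᵏ`, so the coefficients
`(-1)ⁿ a ∘ σ - a` have all moments of order `≤ n` equal to zero: those of order `< n` because the
moments of `a` vanish there, the one of order `n` because `(-1)ⁿ (-1)ⁿ = 1`. The Vandermonde matrix
of distinct nodes is invertible, so `(-1)ⁿ a ∘ σ = a`, which is `D(-h) = (-1)ⁿ D(h)`. -/

theorem exists_perm_apply_eq_neg {ι α : Type*} [Finite ι] [InvolutiveNeg α] {b : ι → α}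
    (hb : Function.Injective b) (hnodes : (fun x : α => -x) '' Set.range b = Set.range b) :
    ∃ σ : Equiv.Perm ι, ∀ i, b (σ i) = -b i := by
  have hneg : ∀ i, ∃ j, b j = -b i := fun i =>
    (hnodes ▸ Set.mem_image_of_mem (fun x : α => -x) ⟨i, rfl⟩ : -b i ∈ Set.range b)
  choose σ hσ using hneg
  have hσ_inj : Function.Injective σ := fun i j hij =>
    hb (neg_injective ((hσ i).symm.trans (hij ▸ hσ j)))
  exact ⟨Equiv.ofBijective σ (Finite.injective_iff_bijective.mp hσ_inj), hσ⟩

theorem sum_comp_perm_mul_pow_of_apply_eq_neg {ι R : Type*} [Fintype ι] [CommRing R]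
    {a b : ι → R} {σ : Equiv.Perm ι} (hσ : ∀ i, b (σ i) = -b i) (k : ℕ) :
    ∑ i, a (σ i) * b i ^ k = (-1) ^ k * ∑ i, a i * b i ^ k := by
  calc ∑ i, a (σ i) * b i ^ k = ∑ i, a (σ i) * (-b (σ i)) ^ k := by simp only [hσ, neg_neg]
    _ = ∑ i, a i * (-b i) ^ k := Equiv.sum_comp σ fun i => a i * (-b i) ^ k
    _ = (-1) ^ k * ∑ i, a i * b i ^ k := by
      rw [mul_sum]
      exact sum_congr rfl fun i _ => by rw [neg_pow]; ring

theorem neg_one_pow_mul_comp_perm_eq_of_apply_eq_neg {R : Type*} [CommRing R] [IsDomain R]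
    {n : ℕ} {a b : Fin (n + 1) → R} (hb : Function.Injective b) {σ : Equiv.Perm (Fin (n + 1))}
    (hσ : ∀ i, b (σ i) = -b i) (hvan : ∀ k < n, ∑ i, a i * b i ^ k = 0) (i : Fin (n + 1)) :
    (-1) ^ n * a (σ i) = a i := by
  have hmoments : ∀ k : Fin (n + 1), ∑ j, ((-1) ^ n * a (σ j) - a j) * b j ^ (k : ℕ) = 0 := by
    intro k
    have hsum : ∑ j, ((-1) ^ n * a (σ j) - a j) * b j ^ (k : ℕ)
        = ((-1) ^ (n + k) - 1) * ∑ j, a j * b j ^ (k : ℕ) := by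
      simp only [sub_mul, sum_sub_distrib, mul_assoc, ← mul_sum,
        sum_comp_perm_mul_pow_of_apply_eq_neg hσ, pow_add]
      ring
    rw [hsum]
    rcases (Nat.lt_succ_iff.mp k.isLt).lt_or_eq with hk | hk
    · rw [hvan k hk, mul_zero]
    · rw [hk, ← two_mul, pow_mul, neg_one_sq, one_pow, sub_self, zero_mul]
  have := congrFun (Matrix.eq_zero_of_forall_pow_sum_mul_pow_eq_zero hb hmoments) i
  exact sub_eq_zero.mp this

theorem exact_symmetric_nodes_implies_symmetric_difference_general (n : ℕ)
    (a b : Fin (n + 1) → ℝ) (hb : Function.Injective b)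
    (hnodes : (fun x : ℝ => -x) '' Set.range b = Set.range b)
    (hvan : ∀ k < n, ∑ i, a i * b i ^ k = 0) :
    (Finset.univ.val.map fun i : Fin (n + 1) => (a i, -b i)) =
      (Finset.univ.val.map fun i : Fin (n + 1) => ((-1 : ℝ) ^ n * a i, b i)) := by
  obtain ⟨σ, hσ⟩ := exists_perm_apply_eq_neg hb hnodes
  have hterm : ∀ i, (a i, -b i) = ((-1 : ℝ) ^ n * a (σ i), b (σ i)) := fun i => by
    rw [neg_one_pow_mul_comp_perm_eq_of_apply_eq_neg hb hσ hvan, hσ]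
  simp_rw [hterm]
  exact (Multiset.map_map (fun i : Fin (n + 1) => ((-1 : ℝ) ^ n * a i, b i)) σ _).symm.trans
    (congrArg _ (Multiset.map_univ_val_equiv σ))

/-- An exact `n`-th generalized Riemann difference whose node set is symmetric
relative to the origin is a symmetric difference: `D(-h) = (-1)ⁿ D(h)` as formal
differences. -/
theorem exact_symmetric_nodes_implies_symmetric_difference (n : ℕ)
    (a b : Fin (n + 1) → ℝ) (hb : Function.Injective b)
    (hnodes : (fun x : ℝ => -x) '' Set.range b = Set.range b)
    (hvan : ∀ k < n, ∑ i, a i * b i ^ k = 0)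
    (hexact : ∑ i, a i * b i ^ n = (n.factorial : ℝ)) :
    (Finset.univ.val.map fun i : Fin (n + 1) => (a i, -b i)) =
      (Finset.univ.val.map fun i : Fin (n + 1) => ((-1 : ℝ) ^ n * a i, b i)) :=
  exact_symmetric_nodes_implies_symmetric_difference_general n a b hb hnodes hvan
end

section
/- Let k be a positive integer and define T(h) = T_k(2h) − 2^{2k−1} T_k(h), where T_k = (Δ_{2k−1,k−1} + Δ_{2k−1,k})/2 is the exact odd symmetric difference with nodes ±1,…,±k and order 2k−1. Then T is an odd difference of order at least 2k+1. -/
open Finset Polynomial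

/-! The moments of `T` are `(2^p - 2^(2k-1)) / 2` times those of `2 T_k`. The moments of `2 T_k`
vanish for `p < 2k - 1`, because the `(2k-1)`-th forward difference kills polynomials of smaller
degree, and for every even `p`, because `i ↦ 2k - 1 - i` changes the sign of the coefficient
`(-1)^i C(2k-1, i)` and swaps the two nodes up to sign. The remaining case `p = 2k - 1` is killed by
the factor. -/

theorem neg_one_pow_sub_eq_mul {R : Type*} [Monoid R] [HasDistribNeg R] {n i : ℕ} (h : i ≤ n) :
    (-1 : R) ^ (n - i) = (-1) ^ n * (-1) ^ i := by
  conv_rhs => rw [← Nat.sub_add_cancel h]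
  rw [pow_add, mul_assoc, ← pow_add, Even.neg_one_pow ⟨i, rfl⟩, mul_one]

variable {R : Type*} [CommRing R] {n : ℕ}

theorem Polynomial.sum_range_neg_one_pow_mul_choose_mul_eval_eq_zero {P : R[X]}
    (hP : P.natDegree < n) :
    ∑ i ∈ range (n + 1), (-1) ^ i * n.choose i * P.eval (i : R) = 0 := by
  have h := fwdDiff_iter_eq_sum_shift (1 : R) P.eval n 0
  rw [fwdDiff_iter_eq_zero_of_degree_lt hP, Pi.zero_apply] at h
  calc ∑ i ∈ range (n + 1), (-1) ^ i * n.choose i * P.eval (i : R)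
      = (-1) ^ n * ∑ i ∈ range (n + 1), (-1) ^ (n - i) * n.choose i * P.eval (i : R) := by
        rw [mul_sum]
        refine sum_congr rfl fun i hi ↦ ?_
        rw [neg_one_pow_sub_eq_mul (Nat.lt_succ_iff.mp (mem_range.mp hi)), ← mul_assoc,
          ← mul_assoc, ← mul_assoc, ← pow_add, Even.neg_one_pow ⟨n, rfl⟩, one_mul]
    _ = 0 := by simpa [zsmul_eq_mul] using h.symm

theorem sum_range_neg_one_pow_mul_choose_mul_eq_zero_of_odd (hn : Odd n) {f : ℕ → R}
    (hf : ∀ i ≤ n, f (n - i) = f i) :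
    ∑ i ∈ range (n + 1), (-1) ^ i * n.choose i * f i = 0 := by
  refine sum_involution (fun i _ ↦ n - i) (fun i hi ↦ ?_) (fun i hi _ ↦ ?_)
    (fun i _ ↦ mem_range.mpr (by omega)) (fun i hi ↦ ?_)
  · have hi : i ≤ n := Nat.lt_succ_iff.mp (mem_range.mp hi)
    rw [neg_one_pow_sub_eq_mul hi, hn.neg_one_pow, Nat.choose_symm hi, hf i hi]
    ring
  · obtain ⟨m, rfl⟩ := hn
    have := mem_range.mp hi
    omega
  · have := mem_range.mp hi
    omega

variable (R) in
/-- The `p`-th moment `∑ aᵢ bᵢ^p` of `2 T_k`. -/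
def symmDiffMoment (k p : ℕ) : R :=
  ∑ i ∈ range (2 * k), (-1) ^ i * (2 * k - 1).choose i * (((k : R) - i) ^ p + ((k : R) - 1 - i) ^ p)

theorem symmDiffMoment_eq_zero_of_lt {k p : ℕ} (hp : p < 2 * k - 1) : symmDiffMoment R k p = 0 := by
  have hk : 2 * k = 2 * k - 1 + 1 := by omega
  have hdeg : ((C (k : R) - X) ^ p + (C ((k : R) - 1) - X) ^ p).natDegree < 2 * k - 1 :=
    lt_of_le_of_lt (by compute_degree) hp
  rw [symmDiffMoment, hk, ← sum_range_neg_one_pow_mul_choose_mul_eval_eq_zero hdeg]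
  simp [sub_sub]

theorem symmDiffMoment_eq_zero_of_even {k p : ℕ} (hk : 0 < k) (hp : Even p) :
    symmDiffMoment R k p = 0 := by
  have hk' : 2 * k = 2 * k - 1 + 1 := by omega
  rw [symmDiffMoment, hk']
  refine sum_range_neg_one_pow_mul_choose_mul_eq_zero_of_odd ⟨k - 1, by omega⟩ fun i hi ↦ ?_
  have hcast : ((2 * k - 1 - i : ℕ) : R) = 2 * k - 1 - i := by
    rw [Nat.cast_sub hi, Nat.cast_sub (by omega)]
    push_cast
    ring
  rw [hcast, add_comm]
  congr 1 <;> rw [← hp.neg_pow] <;> ring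

/-- With `T(h) = T_k(2h) - 2^{2k-1} T_k(h)`, where
`T_k(h)(f) = (1/2) ∑_{i=0}^{2k-1} (-1)^i C(2k-1,i) [f((k-i)h) + f((k-1-i)h)]`, all
moment sums of `T` of order `p ≤ 2k` vanish; that is, `T` is an odd difference of
order at least `2k+1`. -/
theorem T_difference_order (k : ℕ) (hk : 0 < k) :
    ∀ p ≤ 2 * k,
      ∑ i ∈ Finset.range (2 * k),
        (1 / 2 : ℝ) * (-1 : ℝ) ^ i * (Nat.choose (2 * k - 1) i : ℝ) *
          ((2 * ((k : ℝ) - i)) ^ p + (2 * ((k : ℝ) - 1 - i)) ^ p -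
            2 ^ (2 * k - 1) * (((k : ℝ) - i) ^ p + ((k : ℝ) - 1 - i) ^ p)) = 0 := by
  intro p hp
  have hfactor : ∀ i ∈ range (2 * k),
      (1 / 2 : ℝ) * (-1 : ℝ) ^ i * (Nat.choose (2 * k - 1) i : ℝ) *
          ((2 * ((k : ℝ) - i)) ^ p + (2 * ((k : ℝ) - 1 - i)) ^ p -
            2 ^ (2 * k - 1) * (((k : ℝ) - i) ^ p + ((k : ℝ) - 1 - i) ^ p))
        = 1 / 2 * (2 ^ p - 2 ^ (2 * k - 1)) *
          ((-1) ^ i * (2 * k - 1).choose i * (((k : ℝ) - i) ^ p + ((k : ℝ) - 1 - i) ^ p)) := by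
    intro i _
    rw [mul_pow, mul_pow]
    ring
  rw [sum_congr rfl hfactor, ← mul_sum, ← symmDiffMoment]
  obtain hlt | rfl | rfl : p < 2 * k - 1 ∨ p = 2 * k - 1 ∨ p = 2 * k := by omega
  · rw [symmDiffMoment_eq_zero_of_lt hlt, mul_zero]
  · rw [sub_self, mul_zero, zero_mul]
  · rw [symmDiffMoment_eq_zero_of_even hk (even_two_mul k), mul_zero]
end

section
/- Let n ≥ 3 be odd, m = (n−1)/2, and suppose f : ℝ → ℝ satisfies f(h) = o(h^{n−1}) as h → 0. Suppose for each r with m+1 ≤ r ≤ 2m there is an even difference D_r (centered at 0) of order at least 2(m+1), with nodes ±r and remaining nodes in {0, ±1,…,±(r−1)}, such that lim_{h→0} D_r(h)(f)/h^n exists. Then lim_{h→0} [f(h) + f(−h)]/h^n exists. -/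
/-!
Put `φ h = f h + f (-h)`. Folding `D_r` over the pairs of nodes `±v` gives a relation
`∑_{v ≤ r} c_r v * φ (v * h) = o(hⁿ)` whose weights kill the even moments `v², …, v^{2m}` and
whose top weight `c_r r` is nonzero, so these relations span all moment-free combinations of
`φ (h), …, φ (2m h)`. In the coordinates given by the moments, `h ↦ 2h` acts on combinations of
`φ (h), …, φ (m h)` as `diag (4, …, 4^m)`; taking the basis dual to the moments (Lagrange
interpolation at the nodes `v²`) splits `φ = ∑ F_j` with `F_j (2h) - 4^j F_j (h) = o(hⁿ)`.
As `4^j ≤ 2^{n-1} < 2ⁿ` and `F_j = o(h^{n-1})`, telescoping over the scales `h / 2^k` gives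
`F_j = o(hⁿ)`, hence `φ h / hⁿ → 0`.
-/

open Filter Topology Asymptotics Finset

theorem tendsto_const_mul_nhdsNE {c : ℝ} (hc : c ≠ 0) :
    Tendsto (c * ·) (𝓝[≠] 0) (𝓝[≠] 0) :=
  tendsto_nhdsWithin_of_tendsto_nhds_of_eventually_within _
    (((continuous_const_mul c).tendsto' 0 0 (mul_zero c)).mono_left nhdsWithin_le_nhds)
    (eventually_nhdsWithin_of_forall fun _ hx => mul_ne_zero hc hx)

theorem Asymptotics.IsLittleO.comp_const_mul {φ : ℝ → ℝ} {k : ℕ}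
    (hφ : φ =o[𝓝[≠] 0] (· ^ k)) {c : ℝ} (hc : c ≠ 0) :
    (fun h => φ (c * h)) =o[𝓝[≠] 0] (· ^ k) := by
  refine (hφ.comp_tendsto (tendsto_const_mul_nhdsNE hc)).trans_isBigO ?_
  simpa only [Function.comp_def, mul_pow] using isBigO_const_mul_self (c ^ k) (· ^ k) _

theorem isLittleO_of_tendsto_div_of_even {F : ℝ → ℝ} {n : ℕ} (hn : Odd n)
    (hF : ∀ h, F (-h) = F h) {L : ℝ} (hL : Tendsto (fun h => F h / h ^ n) (𝓝[≠] 0) (𝓝 L)) :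
    F =o[𝓝[≠] 0] (· ^ n) := by
  have hneg : Tendsto (fun h => -(F h / h ^ n)) (𝓝[≠] 0) (𝓝 L) := by
    simpa [Function.comp_def, hF, hn.neg_pow, div_neg] using
      hL.comp (tendsto_const_mul_nhdsNE (neg_ne_zero.2 one_ne_zero))
  have hL0 : L = 0 := by linarith [tendsto_nhds_unique hneg hL.neg]
  rw [hL0] at hL
  exact (isLittleO_iff_tendsto' (eventually_nhdsWithin_of_forall fun h hh hpow =>
    absurd ((pow_eq_zero_iff hn.pos.ne').1 hpow) hh)).2 hL

theorem sub_pow_mul_comp_div_two_pow (F : ℝ → ℝ) (q h : ℝ) (K : ℕ) :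
    F h - q ^ K * F (h / 2 ^ K) =
      ∑ j ∈ range K, q ^ j * (F (2 * (h / 2 ^ (j + 1))) - q * F (h / 2 ^ (j + 1))) := by
  have := sum_range_sub' (fun j => q ^ j * F (h / 2 ^ j)) K
  simp only [pow_zero, div_one, one_mul] at this
  rw [← this]
  refine sum_congr rfl fun j _ => ?_
  rw [show 2 * (h / 2 ^ (j + 1)) = h / 2 ^ j by rw [pow_succ]; field_simp]
  ring

theorem tendsto_pow_mul_comp_div_two_pow {F : ℝ → ℝ} {q : ℝ} {k : ℕ}
    (hF : F =o[𝓝[≠] 0] (· ^ k)) (hq : |q| ≤ 2 ^ k) {h : ℝ} (hh : h ≠ 0) :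
    Tendsto (fun K : ℕ => q ^ K * F (h / 2 ^ K)) atTop (𝓝 0) := by
  have hdiv : Tendsto (fun K : ℕ => h / 2 ^ K) atTop (𝓝[≠] 0) := by
    refine tendsto_nhdsWithin_of_tendsto_nhds_of_eventually_within _ ?_
      (Eventually.of_forall fun K => div_ne_zero hh (by positivity))
    simpa [div_eq_mul_inv] using
      (tendsto_pow_atTop_nhds_zero_of_lt_one (by norm_num : (0 : ℝ) ≤ 1 / 2)
        (by norm_num)).const_mul h
  have hbound : (fun K : ℕ => q ^ K * (h / 2 ^ K) ^ k) =O[atTop] (fun _ => (1 : ℝ)) := by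
    refine isBigO_of_le' (c := |h| ^ k) _ fun K => ?_
    rw [norm_mul, norm_pow, norm_pow, Real.norm_eq_abs, Real.norm_eq_abs, abs_div, abs_pow,
      abs_two, div_pow, ← pow_mul, mul_comm K k, pow_mul, norm_one, mul_one]
    calc |q| ^ K * (|h| ^ k / (2 ^ k) ^ K) = |h| ^ k * ((|q| / 2 ^ k) ^ K) := by ring
      _ ≤ |h| ^ k * 1 := by
        gcongr
        exact pow_le_one₀ (by positivity) ((div_le_one (by positivity)).2 hq)
      _ = |h| ^ k := mul_one _
  exact (isLittleO_one_iff ℝ).1 <|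
    ((isBigO_refl (fun K : ℕ => q ^ K) _).mul_isLittleO (hF.comp_tendsto hdiv)).trans_isBigO hbound

theorem isLittleO_pow_of_sub_comp_two_mul {F : ℝ → ℝ} {q : ℝ} {k n : ℕ} (hq : |q| ≤ 2 ^ k)
    (hkn : k < n) (hF : F =o[𝓝[≠] 0] (· ^ k))
    (hF2 : (fun h => F (2 * h) - q * F h) =o[𝓝[≠] 0] (· ^ n)) :
    F =o[𝓝[≠] 0] (· ^ n) := by
  have hq2 : 2 * |q| ≤ 2 ^ n :=
    calc 2 * |q| ≤ 2 * 2 ^ k := by gcongr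
      _ = 2 ^ (k + 1) := (pow_succ' 2 k).symm
      _ ≤ 2 ^ n := pow_le_pow_right₀ one_le_two hkn
  refine isLittleO_iff.2 fun ε hε => ?_
  obtain ⟨δ, hδ, hsmall⟩ := Metric.mem_nhdsWithin_iff.1 (hF2.def hε)
  refine Metric.mem_nhdsWithin_iff.2 ⟨δ, hδ, fun h ⟨hhδ, hh0⟩ => ?_⟩
  simp only [Metric.mem_ball, dist_zero_right, Set.mem_compl_iff,
    Set.mem_singleton_iff] at hhδ hh0
  have hterm : ∀ j : ℕ, ‖q ^ j * (F (2 * (h / 2 ^ (j + 1))) - q * F (h / 2 ^ (j + 1)))‖ ≤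
      ε * ‖h ^ n‖ * (1 / 2) ^ (j + 1) := by
    intro j
    have ht : h / 2 ^ (j + 1) ∈ Metric.ball 0 δ ∩ {0}ᶜ := by
      refine ⟨?_, div_ne_zero hh0 (by positivity)⟩
      rw [Metric.mem_ball, dist_zero_right, norm_div, norm_pow, Real.norm_two]
      exact (div_le_self (norm_nonneg h) (one_le_pow₀ one_le_two)).trans_lt hhδ
    have hρ : |q| ^ j * 2 ^ (j + 1) ≤ (2 ^ n) ^ (j + 1) :=
      calc |q| ^ j * 2 ^ (j + 1) = (2 * |q|) ^ j * 2 := by ring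
        _ ≤ (2 ^ n) ^ j * 2 ^ n := by
          gcongr
          · exact le_self_pow₀ one_le_two (by omega)
        _ = (2 ^ n) ^ (j + 1) := (pow_succ _ j).symm
    calc ‖q ^ j * (F (2 * (h / 2 ^ (j + 1))) - q * F (h / 2 ^ (j + 1)))‖
        ≤ |q| ^ j * (ε * ‖(h / 2 ^ (j + 1)) ^ n‖) := by
          rw [norm_mul, norm_pow, Real.norm_eq_abs]
          exact mul_le_mul_of_nonneg_left (hsmall ht) (by positivity)
      _ = ε * ‖h ^ n‖ * (|q| ^ j / (2 ^ n) ^ (j + 1)) := by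
          rw [div_pow, norm_div, Real.norm_of_nonneg (by positivity : (0 : ℝ) ≤ (2 ^ (j + 1)) ^ n),
            ← pow_mul, ← pow_mul, mul_comm n]
          ring
      _ ≤ ε * ‖h ^ n‖ * (1 / 2) ^ (j + 1) := by
          gcongr
          rw [div_le_iff₀ (by positivity), one_div_pow, div_mul_eq_mul_div, one_mul,
            le_div_iff₀ (by positivity)]
          exact hρ
  have hpartial : ∀ K : ℕ, ‖F h - q ^ K * F (h / 2 ^ K)‖ ≤ ε * ‖h ^ n‖ := fun K =>
    calc ‖F h - q ^ K * F (h / 2 ^ K)‖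
        ≤ ∑ j ∈ range K, ε * ‖h ^ n‖ * (1 / 2) ^ (j + 1) := by
          rw [sub_pow_mul_comp_div_two_pow]
          exact (norm_sum_le _ _).trans (sum_le_sum fun j _ => hterm j)
      _ = ε * ‖h ^ n‖ * (1 / 2 * ∑ j ∈ range K, (1 / 2 : ℝ) ^ j) := by
          simp only [pow_succ, mul_sum]; ring_nf
      _ ≤ ε * ‖h ^ n‖ * (1 / 2 * 2) := by gcongr; exact sum_geometric_two_le K
      _ = ε * ‖h ^ n‖ := by ring
  have hsplit : ∀ K : ℕ, ‖F h‖ ≤ ‖q ^ K * F (h / 2 ^ K)‖ + ε * ‖h ^ n‖ := fun K =>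
    (norm_le_insert' _ _).trans (by gcongr; exact hpartial K)
  show ‖F h‖ ≤ ε * ‖h ^ n‖
  simpa using ge_of_tendsto'
    ((tendsto_pow_mul_comp_div_two_pow hF hq hh0).norm.add_const (ε * ‖h ^ n‖)) hsplit

section Moments

open Polynomial

variable {ι K : Type*} [Field K] {s : Finset ι} {x : ι → K}

theorem sum_mul_eval_eq_zero_of_sum_mul_pow_eq_zero {c : ι → K}
    (hc : ∀ k < #s, ∑ i ∈ s, c i * x i ^ k = 0) {p : K[X]} (hp : p.natDegree < #s) :
    ∑ i ∈ s, c i * p.eval (x i) = 0 := by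
  simp_rw [eval_eq_sum_range' hp, mul_sum, mul_left_comm (c _)]
  rw [sum_comm]
  exact sum_eq_zero fun k hk => by rw [← mul_sum, hc k (mem_range.1 hk), mul_zero]

variable [DecidableEq ι]

theorem Lagrange.natDegree_basis_lt_card (hx : Set.InjOn x s) {i : ι} (hi : i ∈ s) :
    (Lagrange.basis s x i).natDegree < #s := by
  rw [Lagrange.natDegree_basis hx hi]
  exact Nat.sub_lt (card_pos.2 ⟨i, hi⟩) one_pos

theorem eq_zero_of_sum_mul_pow_eq_zero (hx : Set.InjOn x s) {c : ι → K}
    (hc : ∀ k < #s, ∑ i ∈ s, c i * x i ^ k = 0) {i : ι} (hi : i ∈ s) : c i = 0 := by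
  rw [← sum_mul_eval_eq_zero_of_sum_mul_pow_eq_zero hc (Lagrange.natDegree_basis_lt_card hx hi),
    sum_eq_single_of_mem i hi fun j hj hji => by
      rw [Lagrange.eval_basis_of_ne hji.symm hj, mul_zero],
    Lagrange.eval_basis_self hx hi, mul_one]

theorem Lagrange.sum_coeff_basis_mul_pow (hx : Set.InjOn x s) (j : ℕ) {k : ℕ} (hk : k < #s) :
    ∑ i ∈ s, (Lagrange.basis s x i).coeff j * x i ^ k = if j = k then 1 else 0 := by
  have hX : (X ^ k : K[X]) = ∑ i ∈ s, C (x i ^ k) * Lagrange.basis s x i := by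
    rw [← Lagrange.interpolate_apply]
    simpa using Lagrange.eq_interpolate hx (f := X ^ k) (by simpa using hk)
  rw [← coeff_X_pow, hX, finsetSum_coeff]
  exact sum_congr rfl fun i _ => by rw [coeff_C_mul, mul_comm]

theorem Lagrange.sum_range_coeff_basis_mul_pow (hx : Set.InjOn x s) {i i₀ : ι} (hi : i ∈ s)
    (hi₀ : i₀ ∈ s) :
    ∑ j ∈ range #s, (Lagrange.basis s x i).coeff j * x i₀ ^ j = if i = i₀ then 1 else 0 := by
  rw [← eval_eq_sum_range' (Lagrange.natDegree_basis_lt_card hx hi)]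
  split_ifs with h
  · rw [h, Lagrange.eval_basis_self hx hi₀]
  · exact Lagrange.eval_basis_of_ne h hi₀

end Moments

theorem sum_mul_comp_eq_sum_fiberwise {ι κ R : Type*} [DecidableEq κ] [NonUnitalNonAssocSemiring R]
    {t : Finset ι} {S : Finset κ} {ν : ι → κ} (hν : ∀ i ∈ t, ν i ∈ S) (w : ι → R) (G : κ → R) :
    ∑ i ∈ t, w i * G (ν i) = ∑ u ∈ S, (∑ i ∈ t with ν i = u, w i) * G u := by
  rw [← sum_fiberwise_of_maps_to hν]
  refine sum_congr rfl fun u _ => ?_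
  rw [sum_mul]
  exact sum_congr rfl fun i hi => by rw [(mem_filter.1 hi).2]

theorem injective_natCast_sq : Function.Injective fun v : ℕ => (v : ℝ) ^ 2 := by
  intro a b h
  simpa using h

section DilationRelations

variable {φ : ℝ → ℝ} {m n : ℕ}

theorem eq_zero_of_even_moments_eq_zero {w : ℕ → ℝ}
    (hw : ∀ k < m, ∑ v ∈ Icc 1 m, w v * ((v : ℝ) ^ 2) ^ (k + 1) = 0) {v : ℕ} (hv : v ∈ Icc 1 m) :
    w v = 0 := by
  have hv0 : (v : ℝ) ^ 2 ≠ 0 := by have := (mem_Icc.1 hv).1; positivity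
  refine (mul_eq_zero.1 (eq_zero_of_sum_mul_pow_eq_zero (c := fun v => w v * (v : ℝ) ^ 2)
    injective_natCast_sq.injOn (fun k hk => ?_) hv)).resolve_right hv0
  simpa [mul_assoc, ← pow_succ'] using hw k (by simpa using hk)

theorem isLittleO_sum_of_triangular_relations (c : ℕ → ℕ → ℝ)
    (hmom : ∀ r ∈ Icc (m + 1) (2 * m), ∀ k < m,
      ∑ v ∈ Icc 1 (2 * m), c r v * ((v : ℝ) ^ 2) ^ (k + 1) = 0)
    (hsupp : ∀ r ∈ Icc (m + 1) (2 * m), ∀ v, r < v → c r v = 0)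
    (hdiag : ∀ r ∈ Icc (m + 1) (2 * m), c r r ≠ 0)
    (hc : ∀ r ∈ Icc (m + 1) (2 * m),
      (fun h => ∑ v ∈ Icc 1 (2 * m), c r v * φ (v * h)) =o[𝓝[≠] 0] (· ^ n))
    {w : ℕ → ℝ} (hw : ∀ k < m, ∑ v ∈ Icc 1 (2 * m), w v * ((v : ℝ) ^ 2) ^ (k + 1) = 0) :
    (fun h => ∑ v ∈ Icc 1 (2 * m), w v * φ (v * h)) =o[𝓝[≠] 0] (· ^ n) := by
  -- eliminate the top node `r` of `w` with `c r`, descending until `w` lives on `[1, m]`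
  suffices H : ∀ r, m ≤ r → r ≤ 2 * m → ∀ w : ℕ → ℝ,
      (∀ k < m, ∑ v ∈ Icc 1 (2 * m), w v * ((v : ℝ) ^ 2) ^ (k + 1) = 0) →
      (∀ v ∈ Icc 1 (2 * m), r < v → w v = 0) →
      (fun h => ∑ v ∈ Icc 1 (2 * m), w v * φ (v * h)) =o[𝓝[≠] 0] (· ^ n) from
    H (2 * m) (by omega) le_rfl w hw fun v hv hlt => absurd (mem_Icc.1 hv).2 (by omega)
  intro r hr
  induction r, hr using Nat.le_induction with
  | base =>
    intro _ w hw hvan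
    have hsub : Icc 1 m ⊆ Icc 1 (2 * m) := Icc_subset_Icc_right (by omega)
    have hvan' : ∀ v ∈ Icc 1 (2 * m), v ∉ Icc 1 m → w v = 0 := fun v hv hvm =>
      hvan v hv (by simp only [mem_Icc] at hv hvm; omega)
    have hzero : ∀ v ∈ Icc 1 (2 * m), w v = 0 := by
      intro v hv
      by_cases hvm : v ∈ Icc 1 m
      · refine eq_zero_of_even_moments_eq_zero (fun k hk => ?_) hvm
        rw [sum_subset hsub fun v hv hvm => by rw [hvan' v hv hvm, zero_mul]]
        exact hw k hk
      · exact hvan' v hv hvm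
    have hw0 : (fun h => ∑ v ∈ Icc 1 (2 * m), w v * φ (v * h)) = fun _ => 0 :=
      funext fun h => sum_eq_zero fun v hv => by rw [hzero v hv, zero_mul]
    rw [hw0]
    exact isLittleO_zero _ _
  | succ r hr ih =>
    intro hr2 w hw hvan
    have hr1 : r + 1 ∈ Icc (m + 1) (2 * m) := mem_Icc.2 ⟨by omega, hr2⟩
    set μ := w (r + 1) / c (r + 1) (r + 1)
    have hsplit : ∀ G : ℕ → ℝ, ∑ v ∈ Icc 1 (2 * m), w v * G v =
        ∑ v ∈ Icc 1 (2 * m), (w v - μ * c (r + 1) v) * G v +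
          μ * ∑ v ∈ Icc 1 (2 * m), c (r + 1) v * G v := fun G => by
      rw [mul_sum, ← sum_add_distrib]
      exact sum_congr rfl fun v _ => by ring
    have hrest := ih (by omega) (w := fun v => w v - μ * c (r + 1) v)
      (fun k hk => by
        have := hsplit fun v => ((v : ℝ) ^ 2) ^ (k + 1)
        rw [hw k hk, hmom _ hr1 k hk, mul_zero, add_zero] at this
        exact this.symm)
      (fun v hv hrv => by
        rcases (Nat.lt_or_ge (r + 1) v) with hlt | hle
        · simp [hvan v hv hlt, hsupp _ hr1 v hlt]
        · obtain rfl : v = r + 1 := by omega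
          simp [μ, hdiag _ hr1])
    simpa only [← hsplit] using hrest.add ((hc _ hr1).const_mul_left μ)

theorem isLittleO_sum_comp_of_even_moments_eq_zero
    (hrel : ∀ w : ℕ → ℝ, (∀ k < m, ∑ v ∈ Icc 1 (2 * m), w v * ((v : ℝ) ^ 2) ^ (k + 1) = 0) →
      (fun h => ∑ v ∈ Icc 1 (2 * m), w v * φ (v * h)) =o[𝓝[≠] 0] (· ^ n))
    {ι : Type*} {t : Finset ι} {ν : ι → ℕ} (hν : ∀ i ∈ t, ν i ∈ Icc 1 (2 * m)) {w : ι → ℝ}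
    (hw : ∀ k < m, ∑ i ∈ t, w i * ((ν i : ℝ) ^ 2) ^ (k + 1) = 0) :
    (fun h => ∑ i ∈ t, w i * φ (ν i * h)) =o[𝓝[≠] 0] (· ^ n) := by
  refine (hrel _ fun k hk => ?_).congr_left fun h =>
    (sum_mul_comp_eq_sum_fiberwise hν w fun v : ℕ => φ (v * h)).symm
  rw [← hw k hk, sum_mul_comp_eq_sum_fiberwise hν w fun v : ℕ => ((v : ℝ) ^ 2) ^ (k + 1)]

end DilationRelations

section DualWeights

noncomputable def dualWeight (m j v : ℕ) : ℝ :=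
  (Lagrange.basis (Icc 1 m) (fun v : ℕ => (v : ℝ) ^ 2) v).coeff j / (v : ℝ) ^ 2

variable {m : ℕ}

theorem sum_dualWeight_mul_even_pow (j : ℕ) {k : ℕ} (hk : k < m) :
    ∑ v ∈ Icc 1 m, dualWeight m j v * ((v : ℝ) ^ 2) ^ (k + 1) = if j = k then 1 else 0 := by
  rw [← Lagrange.sum_coeff_basis_mul_pow (s := Icc 1 m) injective_natCast_sq.injOn j
    (by simpa using hk)]
  refine sum_congr rfl fun v hv => ?_
  have hv0 : (v : ℝ) ^ 2 ≠ 0 := by have := (mem_Icc.1 hv).1; positivity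
  rw [dualWeight, div_mul_eq_mul_div, pow_succ, ← mul_assoc, mul_div_assoc, div_self hv0, mul_one]

theorem sum_dualWeight {v : ℕ} (hv : v ∈ Icc 1 m) :
    ∑ j ∈ range m, dualWeight m j v = if v = 1 then 1 else 0 := by
  have h1 : (1 : ℕ) ∈ Icc 1 m := mem_Icc.2 ⟨le_rfl, (mem_Icc.1 hv).1.trans (mem_Icc.1 hv).2⟩
  have := Lagrange.sum_range_coeff_basis_mul_pow injective_natCast_sq.injOn hv h1
  simp only [Nat.card_Icc, add_tsub_cancel_right, Nat.cast_one, one_pow, mul_one] at this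
  simp only [dualWeight]
  rw [← sum_div, this]
  split_ifs with h
  · simp [h]
  · exact zero_div _

end DualWeights

theorem isLittleO_pow_of_even_moment_relations {φ : ℝ → ℝ} {m n : ℕ} (hm : 1 ≤ m)
    (hmn : 2 * m < n) (hφ : φ =o[𝓝[≠] 0] (· ^ (2 * m)))
    (hrel : ∀ w : ℕ → ℝ, (∀ k < m, ∑ v ∈ Icc 1 (2 * m), w v * ((v : ℝ) ^ 2) ^ (k + 1) = 0) →
      (fun h => ∑ v ∈ Icc 1 (2 * m), w v * φ (v * h)) =o[𝓝[≠] 0] (· ^ n)) :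
    φ =o[𝓝[≠] 0] (· ^ n) := by
  -- `F j` is the component of `φ` on which doubling acts, modulo relations, as `4 ^ (j + 1)`
  set F : ℕ → ℝ → ℝ := fun j h => ∑ v ∈ Icc 1 m, dualWeight m j v * φ (v * h)
  have hsum : (fun h => ∑ j ∈ range m, F j h) = φ := by
    funext h
    simp only [F]
    rw [sum_comm, sum_eq_single_of_mem 1 (mem_Icc.2 ⟨le_rfl, hm⟩) fun v hv hv1 => by
      rw [← sum_mul, sum_dualWeight hv, if_neg hv1, zero_mul]]
    rw [← sum_mul, sum_dualWeight (mem_Icc.2 ⟨le_rfl, hm⟩), if_pos rfl, one_mul, Nat.cast_one,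
      one_mul]
  have hF : ∀ j, F j =o[𝓝[≠] 0] (· ^ (2 * m)) := fun j =>
    IsLittleO.fun_sum fun v hv => (hφ.comp_const_mul (c := v)
      (Nat.cast_ne_zero.2 (by have := (mem_Icc.1 hv).1; omega))).const_mul_left _
  have hF2 : ∀ j < m,
      (fun h => F j (2 * h) - 4 ^ (j + 1) * F j h) =o[𝓝[≠] 0] (· ^ n) := by
    intro j hj
    have hν : ∀ i ∈ (Icc 1 m).disjSum (Icc 1 m), Sum.elim (2 * ·) id i ∈ Icc 1 (2 * m) := by
      rintro (v | v) hv <;>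
        simp only [inl_mem_disjSum, inr_mem_disjSum, mem_Icc, Sum.elim_inl, Sum.elim_inr, id]
          at hv ⊢ <;>
        omega
    refine (isLittleO_sum_comp_of_even_moments_eq_zero hrel hν
      (w := Sum.elim (dualWeight m j) fun v => -4 ^ (j + 1) * dualWeight m j v)
      fun k hk => ?_).congr_left fun h => ?_
    · simp only [sum_disjSum, Sum.elim_inl, Sum.elim_inr, Nat.cast_mul, Nat.cast_ofNat, mul_pow,
        id]
      simp_rw [mul_left_comm (dualWeight m j _), mul_assoc (-(4 : ℝ) ^ (j + 1))]
      rw [← mul_sum, ← mul_sum, sum_dualWeight_mul_even_pow j hk]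
      split_ifs with hjk
      · subst hjk; norm_num
      · simp
    · simp only [sum_disjSum, Sum.elim_inl, Sum.elim_inr, Nat.cast_mul, Nat.cast_ofNat, id, F,
        mul_sum]
      rw [← sum_sub_distrib, ← sum_add_distrib]
      exact sum_congr rfl fun v _ => by ring_nf
  rw [← hsum]
  refine IsLittleO.fun_sum fun j hj =>
    isLittleO_pow_of_sub_comp_two_mul ?_ hmn (hF j) (hF2 j (mem_range.1 hj))
  calc |(4 : ℝ) ^ (j + 1)| = 4 ^ (j + 1) := abs_of_pos (by positivity)
    _ ≤ 4 ^ m := pow_le_pow_right₀ (by norm_num) (mem_range.1 hj)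
    _ = 2 ^ (2 * m) := by rw [pow_mul]; norm_num

section EvenDifference

variable {ι : Type*} [Fintype ι] {a : ι → ℝ} {b : ι → ℤ}

def foldedCoeff (a : ι → ℝ) (b : ι → ℤ) (v : ℕ) : ℝ :=
  ∑ i with (b i).natAbs = v, a i

theorem sum_apply_neg_eq_of_map_eq {M : Type*} [AddCommMonoid M]
    (heven : univ.val.map (fun i => (a i, -b i)) = univ.val.map (fun i => (a i, b i)))
    (G : ℝ → ℤ → M) : ∑ i, G (a i) (-b i) = ∑ i, G (a i) (b i) := by
  have key := congrArg (fun s => (s.map fun p : ℝ × ℤ => G p.1 p.2).sum) heven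
  simpa only [Multiset.map_map, Function.comp_def, ← sum_eq_multiset_sum] using key

theorem foldedCoeff_eq_zero_of_lt {R v : ℕ} (hb : ∀ i, |b i| ≤ R) (hv : R < v) :
    foldedCoeff a b v = 0 :=
  sum_eq_zero fun i hi => absurd (mem_filter.1 hi).2 (by have := abs_le.1 (hb i); omega)

theorem foldedCoeff_ne_zero
    (heven : univ.val.map (fun i => (a i, -b i)) = univ.val.map (fun i => (a i, b i)))
    (hinj : Function.Injective b) (ha : ∀ i, a i ≠ 0) {r : ℕ} (hr : r ≠ 0)
    (hnode : ∃ i, b i = r) : foldedCoeff a b r ≠ 0 := by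
  classical
  obtain ⟨i, hi⟩ := hnode
  -- evenness supplies the mirror node `-r`, carrying the same coefficient
  obtain ⟨j, -, hj⟩ : ∃ j ∈ univ.val, (a j, b j) = (a i, -b i) := by
    rw [← Multiset.mem_map, ← heven]
    exact Multiset.mem_map_of_mem _ (mem_univ i)
  obtain ⟨haj, hbj⟩ := Prod.mk.inj hj
  have hne : i ≠ j := fun h => by rw [← h, hi] at hbj; omega
  have hfiber : ({x | (b x).natAbs = r} : Finset ι) = {i, j} := by
    ext x
    simp only [mem_filter, mem_univ, true_and, mem_insert, mem_singleton]
    constructor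
    · intro hx
      rcases (by omega : b x = r ∨ b x = -r) with h | h
      · exact Or.inl (hinj (by rw [h, hi]))
      · exact Or.inr (hinj (by rw [h, hbj, hi]))
    · rintro (rfl | rfl) <;> omega
  rw [foldedCoeff, hfiber, sum_pair hne, haj, ← two_mul]
  exact mul_ne_zero two_ne_zero (ha i)

theorem sum_mul_natAbs_eq {N : ℕ} (hb : ∀ i, |b i| ≤ N) (G : ℕ → ℝ) :
    ∑ i, a i * G (b i).natAbs =
      foldedCoeff a b 0 * G 0 + ∑ v ∈ Icc 1 N, foldedCoeff a b v * G v := by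
  rw [sum_mul_comp_eq_sum_fiberwise (S := Icc 0 N) (fun i _ => mem_Icc.2 ⟨Nat.zero_le _, by
      have := abs_le.1 (hb i); omega⟩), ← insert_Icc_add_one_left_eq_Icc (Nat.zero_le N),
    sum_insert (by simp)]
  rfl

theorem sum_foldedCoeff_mul_even_pow_eq_zero {m N : ℕ} (hb : ∀ i, |b i| ≤ N)
    (hord : ∀ k < 2 * (m + 1), ∑ i, a i * (b i : ℝ) ^ k = 0) {k : ℕ} (hk : k < m) :
    ∑ v ∈ Icc 1 N, foldedCoeff a b v * ((v : ℝ) ^ 2) ^ (k + 1) = 0 := by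
  calc ∑ v ∈ Icc 1 N, foldedCoeff a b v * ((v : ℝ) ^ 2) ^ (k + 1)
      = ∑ i, a i * (((b i).natAbs : ℝ) ^ 2) ^ (k + 1) := by
        rw [sum_mul_natAbs_eq hb fun v : ℕ => ((v : ℝ) ^ 2) ^ (k + 1)]; simp
    _ = ∑ i, a i * (b i : ℝ) ^ (2 * (k + 1)) := by simp [pow_mul]
    _ = 0 := hord _ (by omega)

theorem isLittleO_sum_foldedCoeff
    (heven : univ.val.map (fun i => (a i, -b i)) = univ.val.map (fun i => (a i, b i)))
    {N n : ℕ} (hb : ∀ i, |b i| ≤ N) (hn : Odd n) {f : ℝ → ℝ}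
    (hf : Tendsto (fun h => f h + f (-h)) (𝓝[≠] 0) (𝓝 0))
    (hlim : ∃ L, Tendsto (fun h => (∑ i, a i * f (b i * h)) / h ^ n) (𝓝[≠] 0) (𝓝 L)) :
    (fun h => ∑ v ∈ Icc 1 N, foldedCoeff a b v * (f (v * h) + f (-(v * h)))) =o[𝓝[≠] 0]
      (· ^ n) := by
  obtain ⟨L, hL⟩ := hlim
  set φ : ℝ → ℝ := fun h => f h + f (-h)
  set E : ℝ → ℝ := fun h => ∑ v ∈ Icc 1 N, foldedCoeff a b v * φ (v * h)
  have hDneg : ∀ h, ∑ i, a i * f (b i * -h) = ∑ i, a i * f (b i * h) := fun h => by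
    simpa only [Int.cast_neg, neg_mul, mul_neg] using
      sum_apply_neg_eq_of_map_eq heven fun α z => α * f (z * h)
  have hD := isLittleO_of_tendsto_div_of_even hn hDneg hL
  -- `φ` is even, so only `|b i|` matters and the difference folds onto the nodes `0, …, N`
  have hfold : ∀ h, 2 * ∑ i, a i * f (b i * h) = foldedCoeff a b 0 * φ 0 + E h := fun h => by
    have hφ : ∀ i, φ (b i * h) = φ ((b i).natAbs * h) := fun i => by
      rw [Nat.cast_natAbs, Int.cast_abs]
      rcases abs_choice (b i : ℝ) with h' | h' <;> simp [h', φ, add_comm]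
    calc 2 * ∑ i, a i * f (b i * h) = ∑ i, a i * f (b i * h) + ∑ i, a i * f (b i * -h) := by
          rw [hDneg, two_mul]
      _ = ∑ i, a i * φ ((b i).natAbs * h) := by
          rw [← sum_add_distrib]
          exact sum_congr rfl fun i _ => by rw [← hφ, mul_neg, mul_add]
      _ = foldedCoeff a b 0 * φ 0 + E h := by
          rw [sum_mul_natAbs_eq hb fun v : ℕ => φ (v * h), Nat.cast_zero, zero_mul]
  have hE : Tendsto E (𝓝[≠] 0) (𝓝 0) := by
    simpa using tendsto_finsetSum (Icc 1 N) fun v hv =>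
      (hf.comp (tendsto_const_mul_nhdsNE (c := v)
        (Nat.cast_ne_zero.2 (by have := (mem_Icc.1 hv).1; omega)))).const_mul (foldedCoeff a b v)
  have hD0 : Tendsto (fun h => foldedCoeff a b 0 * φ 0 + E h) (𝓝[≠] 0) (𝓝 0) := by
    simp_rw [← hfold]
    simpa using (hD.const_mul_left 2).trans_tendsto <|
      ((continuous_pow n).tendsto' 0 0 (zero_pow hn.pos.ne')).mono_left nhdsWithin_le_nhds
  have hconst : foldedCoeff a b 0 * φ 0 = 0 := by
    simpa using hD0.sub hE
  refine (hD.const_mul_left 2).congr_left fun h => ?_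
  rw [hfold, hconst, zero_add]

end EvenDifference

theorem second_fundamental_lemma_even_general (n : ℕ) (hn : 3 ≤ n)
    (m : ℕ) (hm : n = 2 * m + 1) (f : ℝ → ℝ)
    (hf : (fun h : ℝ => f h) =o[𝓝[≠] (0:ℝ)] fun h => h ^ (n - 1))
    (M : ℕ → ℕ) (a : ∀ r : ℕ, Fin (M r + 1) → ℝ) (b : ∀ r : ℕ, Fin (M r + 1) → ℤ)
    (ha : ∀ r ∈ Finset.Icc (m + 1) (2 * m), ∀ i, a r i ≠ 0)
    (hbinj : ∀ r ∈ Finset.Icc (m + 1) (2 * m), Function.Injective (b r))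
    (heven : ∀ r ∈ Finset.Icc (m + 1) (2 * m),
      (Finset.univ.val.map fun i : Fin (M r + 1) => (a r i, -(b r i))) =
        (Finset.univ.val.map fun i : Fin (M r + 1) => (a r i, b r i)))
    (hord : ∀ r ∈ Finset.Icc (m + 1) (2 * m), ∀ k < 2 * (m + 1),
      ∑ i, a r i * (b r i : ℝ) ^ k = 0)
    (hnode_pos : ∀ r ∈ Finset.Icc (m + 1) (2 * m), ∃ i, b r i = (r : ℤ))
    (hnodes : ∀ r ∈ Finset.Icc (m + 1) (2 * m), ∀ i, |b r i| ≤ (r : ℤ))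
    (hlim : ∀ r ∈ Finset.Icc (m + 1) (2 * m), ∃ L : ℝ,
      Tendsto (fun h : ℝ => (∑ i, a r i * f ((b r i : ℝ) * h)) / h ^ n)
        (𝓝[≠] 0) (𝓝 L)) :
    ∃ L : ℝ, Tendsto (fun h : ℝ => (f h + f (-h)) / h ^ n) (𝓝[≠] 0) (𝓝 L) := by
  subst hm
  have hm1 : 1 ≤ m := by omega
  have hφ : (fun h => f h + f (-h)) =o[𝓝[≠] 0] (· ^ (2 * m)) := by
    simpa using hf.add (hf.comp_const_mul (neg_ne_zero.2 one_ne_zero))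
  have hφ0 : Tendsto (fun h => f h + f (-h)) (𝓝[≠] 0) (𝓝 0) := hφ.trans_tendsto <|
    ((continuous_pow _).tendsto' 0 0 (zero_pow (by omega))).mono_left nhdsWithin_le_nhds
  have hbound : ∀ r ∈ Icc (m + 1) (2 * m), ∀ i, |b r i| ≤ (2 * m : ℕ) := fun r hr i =>
    (hnodes r hr i).trans (by have := (mem_Icc.1 hr).2; omega)
  have hdiag : ∀ r ∈ Icc (m + 1) (2 * m), foldedCoeff (a r) (b r) r ≠ 0 := fun r hr =>
    foldedCoeff_ne_zero (heven r hr) (hbinj r hr) (ha r hr)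
      (by have := (mem_Icc.1 hr).1; omega) (hnode_pos r hr)
  have hrel := fun w hw => isLittleO_sum_of_triangular_relations (φ := fun h => f h + f (-h))
    (w := w) (fun r => foldedCoeff (a r) (b r))
    (fun r hr k hk => sum_foldedCoeff_mul_even_pow_eq_zero (hbound r hr) (hord r hr) hk)
    (fun r hr v hv => foldedCoeff_eq_zero_of_lt (hnodes r hr) hv) hdiag
    (fun r hr => isLittleO_sum_foldedCoeff (heven r hr) (hbound r hr) ⟨m, rfl⟩ hφ0 (hlim r hr))
    hw
  exact ⟨0, (isLittleO_pow_of_even_moment_relations hm1 (by omega) hφ hrel).tendsto_div_nhds_zero⟩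

/-- Second fundamental lemma for even differences. Let `n ≥ 3` be odd, `m = (n-1)/2`,
and `f(h) = o(h^{n-1})` as `h → 0`. Suppose for each `r` with `m+1 ≤ r ≤ 2m` there is
an even difference `D_r` centered at `0`, with nonzero coefficients and distinct
integer nodes, of order at least `2(m+1)`, whose nodes include `±r` with all nodes in
`{0, ±1, …, ±r}`, such that `lim_{h→0} D_r(h)(f)/hⁿ` exists. Then
`lim_{h→0} [f(h) + f(-h)]/hⁿ` exists. -/
theorem second_fundamental_lemma_even (n : ℕ) (hn : 3 ≤ n) (hodd : Odd n)
    (m : ℕ) (hm : n = 2 * m + 1) (f : ℝ → ℝ)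
    (hf : (fun h : ℝ => f h) =o[𝓝[≠] (0:ℝ)] fun h => h ^ (n - 1))
    (M : ℕ → ℕ) (a : ∀ r : ℕ, Fin (M r + 1) → ℝ) (b : ∀ r : ℕ, Fin (M r + 1) → ℤ)
    (ha : ∀ r ∈ Finset.Icc (m + 1) (2 * m), ∀ i, a r i ≠ 0)
    (hbinj : ∀ r ∈ Finset.Icc (m + 1) (2 * m), Function.Injective (b r))
    (heven : ∀ r ∈ Finset.Icc (m + 1) (2 * m),
      (Finset.univ.val.map fun i : Fin (M r + 1) => (a r i, -(b r i))) =
        (Finset.univ.val.map fun i : Fin (M r + 1) => (a r i, b r i)))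
    (hord : ∀ r ∈ Finset.Icc (m + 1) (2 * m), ∀ k < 2 * (m + 1),
      ∑ i, a r i * (b r i : ℝ) ^ k = 0)
    (hnode_pos : ∀ r ∈ Finset.Icc (m + 1) (2 * m), ∃ i, b r i = (r : ℤ))
    (hnode_neg : ∀ r ∈ Finset.Icc (m + 1) (2 * m), ∃ i, b r i = -(r : ℤ))
    (hnodes : ∀ r ∈ Finset.Icc (m + 1) (2 * m), ∀ i, |b r i| ≤ (r : ℤ))
    (hlim : ∀ r ∈ Finset.Icc (m + 1) (2 * m), ∃ L : ℝ,
      Tendsto (fun h : ℝ => (∑ i, a r i * f ((b r i : ℝ) * h)) / h ^ n)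
        (𝓝[≠] 0) (𝓝 L)) :
    ∃ L : ℝ, Tendsto (fun h : ℝ => (f h + f (-h)) / h ^ n) (𝓝[≠] 0) (𝓝 L) :=
  second_fundamental_lemma_even_general n hn m hm f hf M a b ha hbinj heven hord hnode_pos hnodes
    hlim
end

section
/- Let n ≥ 2 and let f be (n−1) times Peano differentiable at c. If the n exact generalized Riemann derivatives lim_{h→0} [∑_{j=0}^n (−1)^j C(n,j) f(c + (k−j)h)]/h^n exist for k = 1, 2, …, n, then f is n times Peano differentiable at c. -/
open Filter Topology Asymptotics Finset

/-
Put `g t = f (c + t) - p (c + t)`, which is `o(tⁿ⁻¹)`, and let `Q h` be the polynomial of degree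
`< n` interpolating `x ↦ g (x h)` at `x = 1, …, n`. Since `n`-th differences annihilate polynomials
of degree `< n`, each generalized Riemann difference of `f` is an alternating sum of the
interpolation errors `g (x h) - Q h x` at `x = k - j`. These vanish at the nodes, and solving the
resulting triangular system shows that the error at every integer `x ∈ [1 - n, n]` is
`L hⁿ + o(hⁿ)`. At `n` integers `x`, the value `Q (2h) x - Q h (2x)` is a difference of two such
errors, so the coefficients `a_d (2h) - 2ᵈ a_d h` of this polynomial in `x` have the same form,
where `a_d h` is the `d`-th coefficient of `Q h`. As `a_d h = o(hᵈ)` and `d < n`, summing the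
dyadic relation over `h, h/2, h/4, …` gives `a_d h = λ_d hⁿ + o(hⁿ)`, and therefore
`g h = Q h 1 = ∑ a_d h` is `λ hⁿ + o(hⁿ)`.
-/

open Polynomial

def littleOPow (m : ℕ) : Submodule ℝ (ℝ → ℝ) where
  carrier := {w | w =o[𝓝[≠] 0] (· ^ m)}
  add_mem' := IsLittleO.add
  zero_mem' := isLittleO_zero _ _
  smul_mem' a _ hw := hw.const_mul_left a

def asympPow (n : ℕ) : Submodule ℝ (ℝ → ℝ) := littleOPow n ⊔ ℝ ∙ (· ^ n)

lemma mem_asympPow_iff {n : ℕ} {w : ℝ → ℝ} :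
    w ∈ asympPow n ↔ ∃ L : ℝ, (fun h => w h - L * h ^ n) ∈ littleOPow n := by
  simp only [asympPow, Submodule.mem_sup, Submodule.mem_span_singleton]
  constructor
  · rintro ⟨y, hy, _, ⟨L, rfl⟩, rfl⟩
    exact ⟨L, by simpa using hy⟩
  · rintro ⟨L, hL⟩
    exact ⟨_, hL, _, ⟨L, rfl⟩, by ext; simp⟩

lemma tendsto_const_mul_nhdsNE_s19 {a : ℝ} (ha : a ≠ 0) :
    Tendsto (a * ·) (𝓝[≠] 0) (𝓝[≠] 0) := by
  have := (Homeomorph.mulLeft₀ a ha).map_punctured_nhds_eq 0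
  simp only [Homeomorph.coe_mulLeft₀, mul_zero] at this
  exact this.le

lemma comp_const_mul_mem_littleOPow {m : ℕ} {w : ℝ → ℝ} (hw : w ∈ littleOPow m) {a : ℝ}
    (ha : a ≠ 0) : (fun h => w (a * h)) ∈ littleOPow m := by
  have hpow : (fun h : ℝ => (a * h) ^ m) =O[𝓝[≠] 0] (· ^ m) := by
    simpa only [mul_pow] using (isBigO_refl (· ^ m) _).const_mul_left (a ^ m)
  exact (hw.comp_tendsto (tendsto_const_mul_nhdsNE_s19 ha)).trans_isBigO hpow

lemma comp_const_mul_mem_asympPow {n : ℕ} {w : ℝ → ℝ} (hw : w ∈ asympPow n) {a : ℝ}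
    (ha : a ≠ 0) : (fun h => w (a * h)) ∈ asympPow n := by
  obtain ⟨L, hL⟩ := mem_asympPow_iff.mp hw
  refine mem_asympPow_iff.mpr ⟨L * a ^ n, ?_⟩
  convert comp_const_mul_mem_littleOPow hL ha using 2
  ring

lemma pow_mem_littleOPow {m n : ℕ} (h : m < n) : (· ^ n) ∈ littleOPow m :=
  (isLittleO_pow_pow h).mono nhdsWithin_le_nhds

lemma littleOPow_anti : Antitone littleOPow := by
  intro m m' hm w hw
  rcases hm.eq_or_lt with rfl | hlt
  · exact hw
  · exact IsLittleO.trans hw (pow_mem_littleOPow hlt)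

lemma mem_asympPow_of_tendsto {n : ℕ} {w : ℝ → ℝ} {L : ℝ}
    (hw : Tendsto (fun h => w h / h ^ n) (𝓝[≠] 0) (𝓝 L)) : w ∈ asympPow n := by
  refine mem_asympPow_iff.mpr ⟨L, (isLittleO_iff_tendsto' ?_).mpr ?_⟩
  · filter_upwards [self_mem_nhdsWithin] with h hh hzero
    exact absurd hzero (pow_ne_zero n hh)
  · refine (tendsto_sub_nhds_zero_iff.mpr hw).congr' ?_
    filter_upwards [self_mem_nhdsWithin] with h hh
    field_simp [pow_ne_zero n hh]

lemma coeff_mem_of_eval_mem {F α ι : Type*} [Field F] [DecidableEq ι] (S : Submodule F (α → F))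
    {s : Finset ι} {x : ι → F} (hx : Set.InjOn x s) {P : α → F[X]} (hP : ∀ h, (P h).degree < #s)
    (heval : ∀ i ∈ s, (fun h => (P h).eval (x i)) ∈ S) (d : ℕ) :
    (fun h => (P h).coeff d) ∈ S := by
  have hcoeff : (fun h => (P h).coeff d)
      = ∑ i ∈ s, (Lagrange.basis s x i).coeff d • fun h => (P h).eval (x i) := by
    funext h
    conv_lhs => rw [Lagrange.eq_interpolate hx (hP h)]
    simp [Lagrange.interpolate_apply, mul_comm]
  rw [hcoeff]
  exact S.sum_mem fun i hi => S.smul_mem _ (heval i hi)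

lemma mem_of_sum_alternating_choose_smul_mem {R M : Type*} [Ring R] [AddCommGroup M]
    [Module R M] (S : Submodule R M) {n : ℕ} {e : ℤ → M}
    (he : ∀ i : ℤ, 1 ≤ i → i ≤ n → e i = 0)
    (hS : ∀ k ∈ Icc 1 n, ∑ j ∈ range (n + 1), ((-1 : R) ^ j * n.choose j) • e (k - j) ∈ S)
    {i : ℤ} (hi : 1 - n ≤ i) (hin : i ≤ n) : e i ∈ S := by
  rcases le_or_gt 1 i with hpos | hneg
  · rw [he i hpos hin]
    exact S.zero_mem
  obtain ⟨m, rfl⟩ : ∃ m : ℕ, i = -m := ⟨i.natAbs, by omega⟩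
  induction m using Nat.strong_induction_on with
  | _ m ih =>
  -- For `k = n - m` the sum contains `e (-m)` with coefficient `(-1) ^ n`; every other term
  -- is `e` at a node or at some `-m'` with `m' < m`.
  have hsum := hS (n - m) (by simp only [mem_Icc]; omega)
  rw [sum_range_succ, Nat.choose_self, Nat.cast_one, mul_one,
    show ((n - m : ℕ) : ℤ) - n = -m by omega] at hsum
  have hrest : ∑ j ∈ range n, ((-1 : R) ^ j * n.choose j) • e ((n - m : ℕ) - j) ∈ S := by
    refine S.sum_mem fun j hj => S.smul_mem _ ?_
    rcases le_or_gt 1 ((n - m : ℕ) - j : ℤ) with hpos' | hneg'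
    · rw [he _ hpos' (by omega)]
      exact S.zero_mem
    · rw [show ((n - m : ℕ) : ℤ) - j = -((j - (n - m) : ℕ) : ℤ) by omega]
      have hjn := mem_range.mp hj
      exact ih _ (by omega) (by omega) (by omega) (by omega)
  exact (S.smul_mem_iff_of_isUnit (isUnit_neg_one.pow n)).mp
    ((S.add_mem_iff_right hrest).mp hsum)

lemma sum_geometric_half_succ_le_one (m : ℕ) : ∑ k ∈ range m, (1 / 2 : ℝ) ^ (k + 1) ≤ 1 := by
  simp_rw [pow_succ, ← sum_mul]
  linarith [sum_geometric_two_le m]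

lemma two_pow_mul_div_two_pow_le {d n : ℕ} (hd : d < n) (k : ℕ) (r : ℝ) (hr : 0 ≤ r) :
    (2 ^ d) ^ k * (r / 2 ^ (k + 1)) ^ n ≤ r ^ n * (1 / 2) ^ (k + 1) := by
  have hexp : (2 : ℝ) ^ (d * k) * 2 ^ (k + 1) ≤ 2 ^ ((k + 1) * n) := by
    rw [← pow_add]
    exact pow_le_pow_right₀ one_le_two (by nlinarith)
  calc (2 ^ d) ^ k * (r / 2 ^ (k + 1)) ^ n = r ^ n * (2 ^ (d * k) / 2 ^ ((k + 1) * n)) := by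
        rw [div_pow, ← pow_mul, ← pow_mul, mul_comm (k + 1)]
        ring
    _ ≤ r ^ n * (1 / 2 ^ (k + 1)) := by
        refine mul_le_mul_of_nonneg_left ?_ (by positivity)
        rw [div_le_div_iff₀ (by positivity) (by positivity), one_mul]
        exact hexp
    _ = r ^ n * (1 / 2) ^ (k + 1) := by rw [one_div_pow]

lemma abs_sum_dyadic_le {e : ℝ → ℝ} {d n : ℕ} (hd : d < n) {ε δ : ℝ} (hε : 0 ≤ ε)
    (he : ∀ t : ℝ, t ≠ 0 → |t| < δ → |e t| ≤ ε * |t| ^ n) {h : ℝ} (hne : h ≠ 0) (hh : |h| < δ)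
    (m : ℕ) : |∑ k ∈ range m, (2 ^ d) ^ k * e (h / 2 ^ (k + 1))| ≤ ε * |h| ^ n := by
  have hterm : ∀ k, |(2 ^ d) ^ k * e (h / 2 ^ (k + 1))| ≤ ε * |h| ^ n * (1 / 2) ^ (k + 1) := by
    intro k
    have habs : |h / 2 ^ (k + 1)| = |h| / 2 ^ (k + 1) := by simp [abs_div]
    have hsmall : |h / 2 ^ (k + 1)| < δ := by
      rw [habs]
      exact (div_le_self (abs_nonneg h) (one_le_pow₀ one_le_two)).trans_lt hh
    calc |(2 ^ d) ^ k * e (h / 2 ^ (k + 1))|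
        = (2 ^ d) ^ k * |e (h / 2 ^ (k + 1))| := by rw [abs_mul, abs_of_pos (by positivity)]
      _ ≤ (2 ^ d) ^ k * (ε * (|h| / 2 ^ (k + 1)) ^ n) := by
          rw [← habs]
          gcongr
          exact he _ (by positivity) hsmall
      _ = ε * ((2 ^ d) ^ k * (|h| / 2 ^ (k + 1)) ^ n) := by ring
      _ ≤ ε * (|h| ^ n * (1 / 2) ^ (k + 1)) :=
          mul_le_mul_of_nonneg_left (two_pow_mul_div_two_pow_le hd k _ (abs_nonneg h)) hε
      _ = _ := by ring
  calc _ ≤ ∑ k ∈ range m, ε * |h| ^ n * (1 / 2) ^ (k + 1) :=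
        (abs_sum_le_sum_abs _ _).trans (sum_le_sum fun k _ => hterm k)
    _ = ε * |h| ^ n * ∑ k ∈ range m, (1 / 2 : ℝ) ^ (k + 1) := by rw [mul_sum]
    _ ≤ ε * |h| ^ n * 1 := by gcongr; exact sum_geometric_half_succ_le_one m
    _ = _ := mul_one _

lemma sub_pow_mul_comp_div_two_pow_eq_sum (φ : ℝ → ℝ) (a h : ℝ) (m : ℕ) :
    φ h - a ^ m * φ (h / 2 ^ m)
      = ∑ k ∈ range m, a ^ k * (φ (2 * (h / 2 ^ (k + 1))) - a * φ (h / 2 ^ (k + 1))) := by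
  have hterm : ∀ k : ℕ, a ^ k * (φ (2 * (h / 2 ^ (k + 1))) - a * φ (h / 2 ^ (k + 1)))
      = a ^ k * φ (h / 2 ^ k) - a ^ (k + 1) * φ (h / 2 ^ (k + 1)) := by
    intro k
    rw [show 2 * (h / 2 ^ (k + 1)) = h / 2 ^ k by rw [pow_succ]; field_simp]
    ring
  rw [sum_congr rfl fun k _ => hterm k, sum_range_sub' (fun k => a ^ k * φ (h / 2 ^ k))]
  simp

lemma tendsto_two_pow_mul_comp_div_two_pow {φ : ℝ → ℝ} {d : ℕ} (hφ : φ =o[𝓝[≠] 0] (· ^ d))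
    {h : ℝ} (hne : h ≠ 0) : Tendsto (fun m : ℕ => (2 ^ d) ^ m * φ (h / 2 ^ m)) atTop (𝓝 0) := by
  have ht : Tendsto (fun m : ℕ => h / 2 ^ m) atTop (𝓝[≠] 0) :=
    tendsto_nhdsWithin_of_tendsto_nhds_of_eventually_within _
      (tendsto_const_nhds.div_atTop (tendsto_pow_atTop_atTop_of_one_lt one_lt_two))
      (Eventually.of_forall fun m => div_ne_zero hne (by positivity))
  have hlim := (hφ.tendsto_div_nhds_zero.comp ht).const_mul (h ^ d)
  rw [mul_zero] at hlim
  refine hlim.congr fun m => ?_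
  simp only [Function.comp_apply, div_pow, ← pow_mul, mul_comm d m]
  field_simp

theorem isLittleO_pow_of_dyadic {φ : ℝ → ℝ} {d n : ℕ} (hd : d < n)
    (hφ : φ =o[𝓝[≠] 0] (· ^ d))
    (hdyadic : (fun h => φ (2 * h) - 2 ^ d * φ h) =o[𝓝[≠] 0] (· ^ n)) :
    φ =o[𝓝[≠] 0] (· ^ n) := by
  refine isLittleO_iff.mpr fun ε hε => ?_
  obtain ⟨δ, hδ, hsmall⟩ := Metric.eventually_nhds_iff.mp
    (eventually_nhdsWithin_iff.mp (isLittleO_iff.mp hdyadic hε))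
  have hsmall' : ∀ t : ℝ, t ≠ 0 → |t| < δ → |φ (2 * t) - 2 ^ d * φ t| ≤ ε * |t| ^ n :=
    fun t ht htδ => by simpa [abs_pow] using hsmall (by simpa using htδ) ht
  filter_upwards [self_mem_nhdsWithin, nhdsWithin_le_nhds (Metric.ball_mem_nhds 0 hδ)]
    with h hne hball
  replace hne : h ≠ 0 := hne
  replace hball : |h| < δ := by simpa using hball
  have hbound : ∀ m : ℕ, |φ h| ≤ |(2 ^ d) ^ m * φ (h / 2 ^ m)| + ε * |h| ^ n := fun m =>
    calc |φ h| = |(2 ^ d) ^ m * φ (h / 2 ^ m) + (φ h - (2 ^ d) ^ m * φ (h / 2 ^ m))| := by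
          ring_nf
      _ ≤ |(2 ^ d) ^ m * φ (h / 2 ^ m)| + |φ h - (2 ^ d) ^ m * φ (h / 2 ^ m)| := abs_add_le _ _
      _ ≤ |(2 ^ d) ^ m * φ (h / 2 ^ m)| + ε * |h| ^ n := by
          rw [sub_pow_mul_comp_div_two_pow_eq_sum]
          gcongr
          exact abs_sum_dyadic_le hd hε.le hsmall' hne hball m
  have hlim := (tendsto_two_pow_mul_comp_div_two_pow hφ hne).abs.add_const (ε * |h| ^ n)
  simpa [abs_pow] using ge_of_tendsto' hlim hbound

lemma mem_asympPow_of_dyadic {φ : ℝ → ℝ} {d n : ℕ} (hd : d < n) (hφ : φ ∈ littleOPow d)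
    (hdyadic : (fun h => φ (2 * h) - 2 ^ d * φ h) ∈ asympPow n) : φ ∈ asympPow n := by
  obtain ⟨β, hβ⟩ := mem_asympPow_iff.mp hdyadic
  have hgap : (2 : ℝ) ^ n - 2 ^ d ≠ 0 := sub_ne_zero.mpr (pow_lt_pow_right₀ one_lt_two hd).ne'
  refine mem_asympPow_iff.mpr ⟨β / (2 ^ n - 2 ^ d), isLittleO_pow_of_dyadic hd ?_ ?_⟩
  · exact IsLittleO.sub hφ ((pow_mem_littleOPow hd).const_mul_left _)
  · refine IsLittleO.congr_left hβ fun h => ?_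
    field_simp
    ring

lemma natDegree_lt_of_degree_lt {R : Type*} [Semiring R] {p : R[X]} {n : ℕ} (hn : 0 < n)
    (hp : p.degree < n) : p.natDegree < n := by
  rcases eq_or_ne p 0 with rfl | hp0
  · simpa
  · exact (natDegree_lt_iff_degree_lt hp0).mpr hp

lemma sum_range_alternating_choose_mul_eval {R : Type*} [CommRing R] {q : R[X]} {n : ℕ}
    (hq : q.natDegree < n) (x y : R) :
    ∑ j ∈ range (n + 1), (-1) ^ j * (n.choose j : R) * q.eval (x - j * y) = 0 := by
  have hdeg : (q.comp (C x - X * C y)).natDegree < n :=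
    natDegree_comp_le.trans_lt (by
      have : (C x - X * C y).natDegree ≤ 1 := by compute_degree
      nlinarith)
  have hdiff := congr_fun (fwdDiff_iter_eq_zero_of_degree_lt hdeg) 0
  rw [fwdDiff_iter_eq_sum_shift] at hdiff
  calc _ = (-1) ^ n * ∑ j ∈ range (n + 1), ((-1 : ℤ) ^ (n - j) * n.choose j) •
          (q.comp (C x - X * C y)).eval (0 + j • 1) := by
        rw [mul_sum]
        refine sum_congr rfl fun j hj => ?_
        obtain ⟨i, rfl⟩ : ∃ i, n = j + i := ⟨n - j, by grind⟩
        have hsq : (-1 : R) ^ i * (-1) ^ i = 1 := by rw [← mul_pow]; simp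
        simp only [Nat.add_sub_cancel_left, eval_comp, zsmul_eq_mul, eval_sub, eval_C, eval_mul,
          eval_X, nsmul_eq_mul, zero_add, mul_one]
        push_cast
        linear_combination -(-1) ^ j * ((j + i).choose j : R) * q.eval (x - j * y) * hsq
    _ = 0 := by rw [hdiff, Pi.zero_apply, mul_zero]

def riemannDiff (n : ℕ) (k : ℝ) (w : ℝ → ℝ) (h : ℝ) : ℝ :=
  ∑ j ∈ range (n + 1), (-1) ^ j * (n.choose j : ℝ) * w ((k - j) * h)

lemma riemannDiff_add_eval {n : ℕ} {q : ℝ[X]} (hq : q.natDegree < n) (k c : ℝ) (w : ℝ → ℝ)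
    (h : ℝ) : riemannDiff n k (fun t => w t + q.eval (c + t)) h = riemannDiff n k w h := by
  have hq0 := sum_range_alternating_choose_mul_eval hq (c + k * h) h
  simp only [riemannDiff, mul_add, sum_add_distrib]
  rw [add_eq_left, ← hq0]
  refine sum_congr rfl fun j _ => ?_
  ring_nf

lemma riemannDiff_eq_sum_sub_eval {n : ℕ} {q : ℝ[X]} (hq : q.natDegree < n) (k : ℝ)
    (w : ℝ → ℝ) (h : ℝ) : riemannDiff n k w h
      = ∑ j ∈ range (n + 1), (-1) ^ j * (n.choose j : ℝ) * (w ((k - j) * h) - q.eval (k - j)) := by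
  have hq0 := sum_range_alternating_choose_mul_eval hq k 1
  simp only [mul_one] at hq0
  simp only [riemannDiff, mul_sub, sum_sub_distrib, hq0, sub_zero]

-- Nodes `1, …, n` rather than `0, …, n - 1`: for `g t = f (c + t) - p (c + t)` the value `g 0`
-- is not controlled by Peano differentiability, which only sees `t ≠ 0`.
lemma exists_interpolant (g : ℝ → ℝ) (n : ℕ) : ∃ Q : ℝ → ℝ[X], (∀ h, (Q h).degree < n) ∧
    ∀ h, ∀ i ∈ Icc (1 : ℤ) n, (Q h).eval (i : ℝ) = g (i * h) := by
  have hinj : Set.InjOn (Int.cast : ℤ → ℝ) (Icc (1 : ℤ) n) := Int.cast_injective.injOn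
  refine ⟨fun h => Lagrange.interpolate (Icc (1 : ℤ) n) (↑) (fun i => g (i * h)), fun h => ?_,
    fun h i hi => Lagrange.eval_interpolate_at_node _ hinj hi⟩
  simpa using Lagrange.degree_interpolate_lt (fun i : ℤ => g (i * h)) hinj

section Interpolant

variable {n : ℕ} {g : ℝ → ℝ} {Q : ℝ → ℝ[X]}

lemma coeff_interpolant_mem_littleOPow {m : ℕ} (hg : g ∈ littleOPow m)
    (hQdeg : ∀ h, (Q h).degree < n)
    (hQnode : ∀ h, ∀ i ∈ Icc (1 : ℤ) n, (Q h).eval (i : ℝ) = g (i * h)) (d : ℕ) :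
    (fun h => (Q h).coeff d) ∈ littleOPow m := by
  refine coeff_mem_of_eval_mem _ (s := Icc (1 : ℤ) n) Int.cast_injective.injOn
    (by simpa using hQdeg) (fun i hi => ?_) d
  have hi0 : (i : ℝ) ≠ 0 := Int.cast_ne_zero.mpr (by simp only [mem_Icc] at hi; omega)
  simpa only [hQnode _ i hi] using comp_const_mul_mem_littleOPow hg hi0

lemma interpolant_error_mem_asympPow (hQdeg : ∀ h, (Q h).degree < n)
    (hQnode : ∀ h, ∀ i ∈ Icc (1 : ℤ) n, (Q h).eval (i : ℝ) = g (i * h))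
    (hR : ∀ k ∈ Icc 1 n, (fun h => riemannDiff n k g h) ∈ asympPow n)
    {i : ℤ} (hi : 1 - n ≤ i) (hin : i ≤ n) :
    (fun h => g (i * h) - (Q h).eval (i : ℝ)) ∈ asympPow n := by
  refine mem_of_sum_alternating_choose_smul_mem (asympPow n)
    (e := fun i h => g (i * h) - (Q h).eval (i : ℝ)) (fun i h1 h2 => ?_) (fun k hk => ?_) hi hin
  · funext h
    simp [hQnode h i (mem_Icc.mpr ⟨h1, h2⟩)]
  · convert hR k hk using 1
    funext h
    have hn : 0 < n := by simp only [mem_Icc] at hk; omega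
    rw [riemannDiff_eq_sum_sub_eval (natDegree_lt_of_degree_lt hn (hQdeg h))]
    simp [Finset.sum_apply]

lemma dyadic_coeff_interpolant_mem_asympPow (hQdeg : ∀ h, (Q h).degree < n)
    (hE : ∀ i : ℤ, 1 - n ≤ i → i ≤ n → (fun h => g (i * h) - (Q h).eval (i : ℝ)) ∈ asympPow n)
    (d : ℕ) : (fun h => (Q (2 * h)).coeff d - 2 ^ d * (Q h).coeff d) ∈ asympPow n := by
  set P : ℝ → ℝ[X] := fun h => Q (2 * h) - (Q h).comp (C 2 * X)
  -- `n` consecutive integers `j` with both `j` and `2 * j` in `[1 - n, n]`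
  set J : Finset ℤ := Icc (-(((n : ℤ) - 1) / 2)) ((n : ℤ) / 2) with hJ
  have hPdeg : ∀ h, (P h).degree < #J := by
    intro h
    rw [hJ, Int.card_Icc, show ((n : ℤ) / 2 + 1 - -(((n : ℤ) - 1) / 2)).toNat = n by omega,
      degree_lt_iff_coeff_zero]
    intro m hm
    have hQm : ∀ h', (Q h').coeff m = 0 := fun h' => coeff_eq_zero_of_degree_lt
      ((hQdeg h').trans_le (by exact_mod_cast hm))
    simp [P, hQm]
  have heval : ∀ j ∈ J, (fun h => (P h).eval (j : ℝ)) ∈ asympPow n := by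
    intro j hj
    simp only [hJ, mem_Icc] at hj
    have hsplit : (fun h => (P h).eval (j : ℝ))
        = (fun h => g ((2 * j : ℤ) * h) - (Q h).eval ((2 * j : ℤ) : ℝ))
          - fun h => g (j * (2 * h)) - (Q (2 * h)).eval (j : ℝ) := by
      funext h
      simp only [P, eval_sub, eval_comp, eval_mul, eval_C, eval_X, Pi.sub_apply]
      push_cast
      ring_nf
    rw [hsplit]
    exact sub_mem (hE _ (by omega) (by omega))
      (comp_const_mul_mem_asympPow (hE j (by omega) (by omega)) two_ne_zero)
  convert coeff_mem_of_eval_mem _ Int.cast_injective.injOn hPdeg heval d using 2 with h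
  simp [P]
  ring

lemma mem_asympPow_of_coeff_interpolant (hn : 0 < n) (hQdeg : ∀ h, (Q h).degree < n)
    (hQnode : ∀ h, ∀ i ∈ Icc (1 : ℤ) n, (Q h).eval (i : ℝ) = g (i * h))
    (hcoeff : ∀ d < n, (fun h => (Q h).coeff d) ∈ asympPow n) : g ∈ asympPow n := by
  have hg : g = ∑ d ∈ range n, fun h => (Q h).coeff d := by
    funext h
    have := hQnode h 1 (by simp only [mem_Icc]; omega)
    rw [eval_eq_sum_range' (natDegree_lt_of_degree_lt hn (hQdeg h))] at this
    simpa [Finset.sum_apply] using this.symm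
  rw [hg]
  exact sum_mem fun d hd => hcoeff d (mem_range.mp hd)

end Interpolant

lemma peanoDifferentiable_of_mem_asympPow {n : ℕ} {f : ℝ → ℝ} {c : ℝ} {p : ℝ[X]}
    (hp : p.natDegree ≤ n) (hmem : (fun t => f (c + t) - p.eval (c + t)) ∈ asympPow n) :
    PeanoDifferentiable n f c := by
  obtain ⟨L, hL⟩ := mem_asympPow_iff.mp hmem
  refine ⟨p + C L * (X - C c) ^ n, natDegree_le_iff_degree_le.mp ?_, ?_⟩
  · refine (natDegree_add_le _ _).trans (max_le hp ?_)
    compute_degree!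
  · refine IsLittleO.congr_left hL fun h => ?_
    simp
    ring

/-- The GGR theorem: if `f` is `n-1` times Peano differentiable at `c` and the `n`
generalized Riemann derivatives
`lim_{h→0} (∑_{j=0}^n (-1)^j C(n,j) f(c + (k-j)h))/hⁿ` exist for `k = 1, …, n`,
then `f` is `n` times Peano differentiable at `c`. -/
theorem GGR (n : ℕ) (hn : 2 ≤ n) (f : ℝ → ℝ) (c : ℝ)
    (hPeano : PeanoDifferentiable (n - 1) f c)
    (hlim : ∀ k ∈ Finset.Icc 1 n, ∃ L : ℝ,
      Tendsto (fun h : ℝ =>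
          (∑ j ∈ Finset.range (n + 1),
            (-1 : ℝ) ^ j * (Nat.choose n j : ℝ) * f (c + ((k : ℝ) - j) * h)) / h ^ n)
        (𝓝[≠] 0) (𝓝 L)) :
    PeanoDifferentiable n f c := by
  obtain ⟨p, hpdeg, hp⟩ := hPeano
  have hpn : p.natDegree < n := natDegree_lt_of_degree_lt (by omega)
    (hpdeg.trans_lt (WithBot.coe_lt_coe.mpr (Nat.sub_lt (by omega) one_pos)))
  set g : ℝ → ℝ := fun t => f (c + t) - p.eval (c + t)
  obtain ⟨Q, hQdeg, hQnode⟩ := exists_interpolant g n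
  have hR : ∀ k ∈ Icc 1 n, (fun h => riemannDiff n k g h) ∈ asympPow n := fun k hk => by
    obtain ⟨L, hL⟩ := hlim k hk
    refine mem_asympPow_of_tendsto (hL.congr fun h => ?_)
    rw [← riemannDiff_add_eval hpn k c g h]
    simp [g, riemannDiff]
  have hcoeff : ∀ d < n, (fun h => (Q h).coeff d) ∈ asympPow n := fun d hd =>
    mem_asympPow_of_dyadic hd
      (littleOPow_anti (by omega) (coeff_interpolant_mem_littleOPow hp hQdeg hQnode d))
      (dyadic_coeff_interpolant_mem_asympPow hQdeg
        (fun i => interpolant_error_mem_asympPow hQdeg hQnode hR) d)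
  exact peanoDifferentiable_of_mem_asympPow hpn.le
    (mem_asympPow_of_coeff_interpolant (by omega) hQdeg hQnode hcoeff)
end
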